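/- arXiv:1309.1317 — 15 statements merged into one kernel-verified Lean document; each statement's English description precedes it below -/
import Mathlib

section
/- Let ‖·‖ be a seminorm on ℝ^m and let F : ℝ^m → ℝ^m satisfy the contractivity (forward-Euler) condition: for all U, V ∈ ℝ^m and all 0 ≤ τ ≤ τ₀ one has ‖U + τF(U) − (V + τF(V))‖ ≤ ‖U − V‖. Let s ≥ 1, let C > 0, let α be an (s+1)×s real matrix with nonnegative entries, with α_{ij} = 0 whenever j ≥ i (explicitness), and with row sums ∑_j α_{ij} ≤ 1 for every 1 ≤ i ≤ s+1; set v_i = 1 − ∑_j α_{ij}. Fix a step size 0 < τ ≤ C·τ₀ and vectors U, Ũ ∈ ℝ^m and residuals r_1, …, r_{s+1} ∈ ℝ^m. Define recursively Y_i = v_i U + ∑_{j=1}^{i−1} α_{ij}(Y_j + (τ/C)F(Y_j)) and Ỹ_i = v_i Ũ + ∑_{j=1}^{i−1} α_{ij}(Ỹ_j + (τ/C)F(Ỹ_j)) + r_i for i = 1, …, s+1. Then ‖Ỹ_{s+1} − Y_{s+1}‖ ≤ ‖Ũ − U‖ + ∑_{j=1}^{s+1} ‖r_j‖. -/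
/-!
Subtracting the two stage recursions, each stage error `Z i - Y i` is `v i • (V - U)` plus a
combination with weights `α i j` of the images under the forward Euler step
`x ↦ x + (τ/C) • F x` of earlier stage errors, plus `r i`. The Euler step is nonexpansive
because `τ/C ≤ τ₀`, and the weights `v i, α i j` are nonnegative with sum at most one, so by
strong induction over the stages the error never exceeds `N (V - U)` plus the residuals
introduced so far.
-/

open Finset

theorem Seminorm.smul_add_sum_smul_le {E ι : Type*} [AddCommGroup E] [Module ℝ E]
    (N : Seminorm ℝ E) (S : Finset ι) {a B : ℝ} {b : ι → ℝ} {x : E} {y : ι → E}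
    (ha : 0 ≤ a) (hb : ∀ j ∈ S, 0 ≤ b j) (hab : a + ∑ j ∈ S, b j ≤ 1)
    (hx : N x ≤ B) (hy : ∀ j ∈ S, N (y j) ≤ B) :
    N (a • x + ∑ j ∈ S, b j • y j) ≤ B := by
  have hB : 0 ≤ B := (apply_nonneg N x).trans hx
  calc N (a • x + ∑ j ∈ S, b j • y j)
      ≤ a * N x + ∑ j ∈ S, b j * N (y j) := by
        refine (map_add_le_add N _ _).trans (add_le_add ?_ ?_)
        · rw [map_smul_eq_mul, Real.norm_of_nonneg ha]
        · refine (Finset.le_sum_of_subadditive N (map_zero N).le (map_add_le_add N) _ _).trans ?_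
          refine sum_le_sum fun j hj => ?_
          rw [map_smul_eq_mul, Real.norm_of_nonneg (hb j hj)]
    _ ≤ a * B + ∑ j ∈ S, b j * B :=
        add_le_add (mul_le_mul_of_nonneg_left hx ha)
          (sum_le_sum fun j hj => mul_le_mul_of_nonneg_left (hy j hj) (hb j hj))
    _ = (a + ∑ j ∈ S, b j) * B := by rw [add_mul, sum_mul]
    _ ≤ B := mul_le_of_le_one_left hB hab

section ShuOsher

variable {E : Type*} [AddCommGroup E] [Module ℝ E] {s : ℕ}
  {α : Fin (s + 1) → Fin s → ℝ} {v : Fin (s + 1) → ℝ} {G : E → E}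
  {U V : E} {r Y Z : Fin (s + 1) → E}

def IsShuOsherStages (α : Fin (s + 1) → Fin s → ℝ) (v : Fin (s + 1) → ℝ) (G : E → E) (U : E)
    (r Y : Fin (s + 1) → E) : Prop :=
  ∀ i : Fin (s + 1), Y i = v i • U +
    (∑ j : Fin s, if (j : ℕ) < (i : ℕ) then α i j • G (Y j.castSucc) else 0) + r i

theorem IsShuOsherStages.sub_eq (hY : IsShuOsherStages α v G U 0 Y)
    (hZ : IsShuOsherStages α v G V r Z) (i : Fin (s + 1)) :
    Z i - Y i = v i • (V - U) +
      ∑ j ∈ univ.filter (fun j : Fin s => (j : ℕ) < (i : ℕ)),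
        α i j • (G (Z j.castSucc) - G (Y j.castSucc)) + r i := by
  simp only [hZ i, hY i, Pi.zero_apply, add_zero, ← sum_filter, smul_sub, sum_sub_distrib]
  abel

theorem IsShuOsherStages.apply_sub_le (N : Seminorm ℝ E) (hG : ∀ x y, N (G x - G y) ≤ N (x - y))
    (hα : ∀ i j, 0 ≤ α i j) (hv : ∀ i, 0 ≤ v i) (hαv : ∀ i, v i + ∑ j, α i j ≤ 1)
    (hY : IsShuOsherStages α v G U 0 Y) (hZ : IsShuOsherStages α v G V r Z)
    (i : Fin (s + 1)) :
    N (Z i - Y i) ≤ N (V - U) + ∑ k ∈ Iic i, N (r k) := by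
  induction i using WellFoundedLT.induction with
  | ind i ih =>
    set S := univ.filter (fun j : Fin s => (j : ℕ) < (i : ℕ))
    have hr : 0 ≤ ∑ k ∈ Iio i, N (r k) := sum_nonneg fun k _ => apply_nonneg N _
    have hearlier : ∀ j ∈ S, N (G (Z j.castSucc) - G (Y j.castSucc)) ≤
        N (V - U) + ∑ k ∈ Iio i, N (r k) := by
      intro j hj
      have hji : j.castSucc < i := by simpa [S, Fin.lt_def] using hj
      refine (hG _ _).trans ((ih _ hji).trans (add_le_add_right ?_ _))
      refine sum_le_sum_of_subset_of_nonneg (fun k hk => ?_) fun k _ _ => apply_nonneg N _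
      exact mem_Iio.2 ((mem_Iic.1 hk).trans_lt hji)
    have hweights : v i + ∑ j ∈ S, α i j ≤ 1 :=
      (add_le_add_right (sum_le_sum_of_subset_of_nonneg (subset_univ S)
        fun j _ _ => hα i j) _).trans (hαv i)
    calc N (Z i - Y i)
        ≤ N (v i • (V - U) + ∑ j ∈ S, α i j • (G (Z j.castSucc) - G (Y j.castSucc))) +
            N (r i) := by
          rw [hY.sub_eq hZ i]
          exact map_add_le_add N _ _
      _ ≤ N (V - U) + ∑ k ∈ Iio i, N (r k) + N (r i) :=
          add_le_add_left (N.smul_add_sum_smul_le S (hv i) (fun j _ => hα i j) hweights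
            (le_add_of_nonneg_right hr) hearlier) _
      _ = N (V - U) + ∑ k ∈ Iic i, N (r k) := by
          rw [Iic_eq_cons_Iio, sum_cons, add_assoc, add_comm (N (r i))]

end ShuOsher

theorem ssp_no_internal_amplification_general
    (m s : ℕ)
    (N : Seminorm ℝ (Fin m → ℝ)) (F : (Fin m → ℝ) → (Fin m → ℝ))
    (τ₀ : ℝ)
    (hF : ∀ (U V : Fin m → ℝ) (τ : ℝ), 0 ≤ τ → τ ≤ τ₀ →
      N (U + τ • F U - (V + τ • F V)) ≤ N (U - V))
    (C : ℝ) (hC : 0 < C)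
    (α : Fin (s+1) → Fin s → ℝ)
    (hα0 : ∀ i j, 0 ≤ α i j)
    (hαrow : ∀ i, ∑ j, α i j ≤ 1)
    (v : Fin (s+1) → ℝ) (hv : ∀ i, v i = 1 - ∑ j, α i j)
    (τ : ℝ) (hτ : 0 < τ) (hτC : τ ≤ C * τ₀)
    (U V : Fin m → ℝ) (r : Fin (s+1) → Fin m → ℝ)
    (Y Z : Fin (s+1) → Fin m → ℝ)
    (hY : ∀ i : Fin (s+1), Y i = v i • U +
      ∑ j : Fin s, if (j : ℕ) < (i : ℕ) then
        α i j • (Y j.castSucc + (τ / C) • F (Y j.castSucc)) else 0)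
    (hZ : ∀ i : Fin (s+1), Z i = v i • V +
      (∑ j : Fin s, if (j : ℕ) < (i : ℕ) then
        α i j • (Z j.castSucc + (τ / C) • F (Z j.castSucc)) else 0) + r i) :
    N (Z (Fin.last s) - Y (Fin.last s)) ≤ N (V - U) + ∑ j, N (r j) := by
  have hEuler : ∀ x y, N (x + (τ / C) • F x - (y + (τ / C) • F y)) ≤ N (x - y) :=
    fun x y => hF x y _ (div_nonneg hτ.le hC.le) ((div_le_iff₀' hC).2 hτC)
  have hv0 : ∀ i, 0 ≤ v i := fun i => by rw [hv i]; linarith [hαrow i]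
  have hweights : ∀ i, v i + ∑ j, α i j ≤ 1 := fun i => by rw [hv i, sub_add_cancel]
  have hexact : IsShuOsherStages α v (fun x => x + (τ / C) • F x) U 0 Y := fun i => by
    rw [hY i, Pi.zero_apply, add_zero]
  have hlast := hexact.apply_sub_le N hEuler hα0 hv0 hweights hZ (Fin.last s)
  rwa [← Fin.top_eq_last, Iic_top] at hlast

/-- **Theorem 3.1** (no internal error amplification for SSP Runge–Kutta methods).
If `F` is contractive (forward-Euler condition) with respect to a seminorm `N`,
and an explicit SSP Runge–Kutta method with SSP coefficient `C > 0` given in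
canonical Shu–Osher form `α` (nonnegative, strictly lower triangular, row sums ≤ 1)
is applied with step size `0 < τ ≤ C·τ₀`, then the perturbed solution satisfies
`N (Z (s+1) − Y (s+1)) ≤ N (V − U) + ∑ N (r j)`. -/
theorem ssp_no_internal_amplification
    (m s : ℕ) (hs : 1 ≤ s)
    (N : Seminorm ℝ (Fin m → ℝ)) (F : (Fin m → ℝ) → (Fin m → ℝ))
    (τ₀ : ℝ)
    (hF : ∀ (U V : Fin m → ℝ) (τ : ℝ), 0 ≤ τ → τ ≤ τ₀ →
      N (U + τ • F U - (V + τ • F V)) ≤ N (U - V))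
    (C : ℝ) (hC : 0 < C)
    (α : Fin (s+1) → Fin s → ℝ)
    (hα0 : ∀ i j, 0 ≤ α i j)
    (hαexp : ∀ (i : Fin (s+1)) (j : Fin s), (i : ℕ) ≤ (j : ℕ) → α i j = 0)
    (hαrow : ∀ i, ∑ j, α i j ≤ 1)
    (v : Fin (s+1) → ℝ) (hv : ∀ i, v i = 1 - ∑ j, α i j)
    (τ : ℝ) (hτ : 0 < τ) (hτC : τ ≤ C * τ₀)
    (U V : Fin m → ℝ) (r : Fin (s+1) → Fin m → ℝ)
    (Y Z : Fin (s+1) → Fin m → ℝ)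
    (hY : ∀ i : Fin (s+1), Y i = v i • U +
      ∑ j : Fin s, if (j : ℕ) < (i : ℕ) then
        α i j • (Y j.castSucc + (τ / C) • F (Y j.castSucc)) else 0)
    (hZ : ∀ i : Fin (s+1), Z i = v i • V +
      (∑ j : Fin s, if (j : ℕ) < (i : ℕ) then
        α i j • (Z j.castSucc + (τ / C) • F (Z j.castSucc)) else 0) + r i) :
    N (Z (Fin.last s) - Y (Fin.last s)) ≤ N (V - U) + ∑ j, N (r j) :=
  ssp_no_internal_amplification_general m s N F τ₀ hF C hC α hα0 hαrow v hv τ hτ hτC U V r Y Z hY hZ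
end

section
/- Let s ≥ 1, C > 0, and let α be an (s+1)×s real matrix with nonnegative entries, with α_{ij} = 0 whenever j ≥ i, and with row sums ∑_{j=1}^{s} α_{ij} ≤ 1 for every 1 ≤ i ≤ s+1. Write α_{1:s} for the top s×s block of α (which is strictly lower triangular, hence nilpotent) and α_{s+1} ∈ ℝ^s for the last row. For z ∈ ℂ define the row vector Q(z) = (1 + z/C) · α_{s+1} · ∑_{k=0}^{s−1} (1 + z/C)^k (α_{1:s})^k (which equals (1 + z/C)·α_{s+1}·(I_s − (1 + z/C)α_{1:s})^{−1}). Then for every z ∈ ℂ with |z + C| ≤ C and every 1 ≤ j ≤ s, the j-th component of Q(z) satisfies |Q_j(z)| ≤ 1. -/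
/-!
With `w = 1 + z / C` the disk `|z + C| ≤ C` becomes `|w| ≤ 1`, and
`Q_j(z) = w ∑_{k<s} w ^ k r_k` with `r_k = (α_{s+1} α_{1:s} ^ k)_j ≥ 0`, so `|Q_j(z)| ≤ ∑_k r_k`.
That sum is the `j`-th entry of `α_{s+1} ∑_{k<s} α_{1:s} ^ k`; since `∑_{k<n+1} M ^ k = M ∑_{k<n} M ^ k + 1`,
induction on `n` shows that every entry of `∑_{k<n} α_{1:s} ^ k` is at most `1` (and vanishes above
the diagonal), and a row with nonnegative entries summing to at most `1` keeps that bound.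
-/

open Finset Matrix

section GeomSum

variable {ι R : Type*} [Fintype ι] [LinearOrder ι] [Semiring R] [PartialOrder R] [IsOrderedRing R]
  {M : Matrix ι ι R}

/-- The vanishing above the diagonal is what makes the induction close on the diagonal. -/
theorem Matrix.geom_sum_apply_le_ite (h0 : ∀ p q, 0 ≤ M p q) (hM : ∀ p q, p ≤ q → M p q = 0)
    (hrow : ∀ p, ∑ q, M p q ≤ 1) (n : ℕ) (p j : ι) :
    (∑ k ∈ range n, M ^ k) p j ≤ if j ≤ p then 1 else 0 := by
  induction n generalizing p with
  | zero => split_ifs <;> simp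
  | succ n ih =>
    have hle_one : ∀ q, (∑ k ∈ range n, M ^ k) q j ≤ 1 := fun q =>
      (ih q).trans (by split_ifs <;> simp)
    rw [geom_sum_succ, add_apply, mul_apply, one_apply]
    by_cases hjp : j < p
    · calc ∑ q, M p q * (∑ k ∈ range n, M ^ k) q j + (if p = j then 1 else 0)
          ≤ ∑ q, M p q * 1 + 0 := by
            rw [if_neg hjp.ne']
            gcongr with q
            exacts [h0 p q, hle_one q]
        _ ≤ if j ≤ p then 1 else 0 := by simpa [hjp.le] using hrow p
    · have hterm : ∀ q, M p q * (∑ k ∈ range n, M ^ k) q j ≤ 0 := fun q => by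
        rcases le_or_gt p q with hpq | hqp
        · simp [hM p q hpq]
        · simpa [(hqp.trans_le (not_lt.1 hjp)).not_ge] using
            mul_le_mul_of_nonneg_left (ih q) (h0 p q)
      calc ∑ q, M p q * (∑ k ∈ range n, M ^ k) q j + (if p = j then 1 else 0)
          ≤ 0 + (if p = j then 1 else 0) := by gcongr; exact sum_nonpos fun q _ => hterm q
        _ ≤ if j ≤ p then 1 else 0 := by
            rw [zero_add]; split_ifs <;> simp_all

theorem Matrix.vecMul_geom_sum_apply_le_one (h0 : ∀ p q, 0 ≤ M p q)
    (hM : ∀ p q, p ≤ q → M p q = 0) (hrow : ∀ p, ∑ q, M p q ≤ 1) {b : ι → R} (hb0 : 0 ≤ b)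
    (hb : ∑ p, b p ≤ 1) (n : ℕ) (j : ι) :
    (b ᵥ* ∑ k ∈ range n, M ^ k) j ≤ 1 :=
  calc (b ᵥ* ∑ k ∈ range n, M ^ k) j = ∑ p, b p * (∑ k ∈ range n, M ^ k) p j := rfl
    _ ≤ ∑ p, b p * 1 := by
        gcongr with p
        · exact hb0 p
        · exact (geom_sum_apply_le_ite h0 hM hrow n p j).trans (by split_ifs <;> simp)
    _ ≤ 1 := by simpa using hb

end GeomSum

theorem norm_sum_pow_mul_ofReal_le {𝕜 : Type*} [RCLike 𝕜] {w : 𝕜} (hw : ‖w‖ ≤ 1) {r : ℕ → ℝ}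
    (hr : ∀ k, 0 ≤ r k) (n : ℕ) :
    ‖∑ k ∈ range n, w ^ k * (r k : 𝕜)‖ ≤ ∑ k ∈ range n, r k :=
  (norm_sum_le _ _).trans <| sum_le_sum fun k _ => by
    rw [norm_mul, norm_pow, RCLike.norm_ofReal, abs_of_nonneg (hr k)]
    exact mul_le_of_le_one_left (hr k) (pow_le_one₀ (norm_nonneg w) hw)

theorem norm_one_add_div_le_one {C : ℝ} (hC : 0 < C) {z : ℂ} (hz : ‖z + C‖ ≤ C) :
    ‖1 + z / C‖ ≤ 1 := by
  have hC' : (C : ℂ) ≠ 0 := Complex.ofReal_ne_zero.2 hC.ne'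
  rw [show 1 + z / C = (z + C) / C by field_simp; ring, norm_div, Complex.norm_real,
    Real.norm_of_nonneg hC.le, div_le_one hC]
  exact hz

theorem ssp_internal_stability_on_disk_general
    (s : ℕ) (C : ℝ) (hC : 0 < C)
    (α : Fin (s+1) → Fin s → ℝ)
    (hα0 : ∀ i j, 0 ≤ α i j)
    (hαexp : ∀ (i : Fin (s+1)) (j : Fin s), (i : ℕ) ≤ (j : ℕ) → α i j = 0)
    (hαrow : ∀ i, ∑ j, α i j ≤ 1)
    (A : Matrix (Fin s) (Fin s) ℂ) (hA : ∀ i j, A i j = (α i.castSucc j : ℂ))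
    (b : Fin s → ℂ) (hb : ∀ j, b j = (α (Fin.last s) j : ℂ))
    (Q : ℂ → Fin s → ℂ)
    (hQ : ∀ z, Q z = fun j =>
      (1 + z / C) * Matrix.vecMul b (∑ k ∈ Finset.range s, (1 + z / C) ^ k • A ^ k) j)
    (z : ℂ) (hz : ‖z + (C : ℂ)‖ ≤ C) (j : Fin s) :
    ‖Q z j‖ ≤ 1 := by
  set M : Matrix (Fin s) (Fin s) ℝ := Matrix.of fun i j => α i.castSucc j
  set w : ℂ := 1 + z / C
  have hw : ‖w‖ ≤ 1 := norm_one_add_div_le_one hC hz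
  have hM0 : ∀ p q, 0 ≤ M p q := fun p q => hα0 _ _
  have hA' : A = M.map Complex.ofRealHom := Matrix.ext hA
  have hb' : b = Complex.ofRealHom ∘ α (Fin.last s) := funext hb
  have hQ' : Q z j = w * ∑ k ∈ range s, w ^ k * ((α (Fin.last s) ᵥ* M ^ k) j : ℂ) := by
    simp only [hQ, vecMul_sum, vecMul_smul, Finset.sum_apply, Pi.smul_apply, smul_eq_mul, hA',
      ← Matrix.map_pow, hb', ← RingHom.map_vecMul, Complex.ofRealHom_eq_coe, w]
  have hsum : ∑ k ∈ range s, (α (Fin.last s) ᵥ* M ^ k) j ≤ 1 := by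
    rw [← Finset.sum_apply, ← vecMul_sum]
    exact vecMul_geom_sum_apply_le_one hM0 (fun p q h => hαexp _ _ h) (fun p => hαrow _)
      (hα0 _) (hαrow _) s j
  have hr0 : ∀ k, 0 ≤ (α (Fin.last s) ᵥ* M ^ k) j := fun k =>
    dotProduct_nonneg_of_nonneg (hα0 _) fun p => pow_apply_nonneg hM0 k p j
  rw [hQ', norm_mul]
  exact mul_le_one₀ hw (norm_nonneg _) ((norm_sum_pow_mul_ofReal_le hw hr0 s).trans hsum)

/-- **Theorem 3.2.** For an explicit SSP Runge–Kutta method with SSP coefficient `C > 0`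
in canonical Shu–Osher form `α` (nonnegative entries, strictly lower triangular,
row sums ≤ 1), each internal stability function
`Q(z) = (1 + z/C) · α_{s+1} · ∑_{k<s} (1+z/C)^k (α_{1:s})^k`
satisfies `|Q_j(z)| ≤ 1` on the disk `|z + C| ≤ C`. -/
theorem ssp_internal_stability_on_disk
    (s : ℕ) (hs : 1 ≤ s) (C : ℝ) (hC : 0 < C)
    (α : Fin (s+1) → Fin s → ℝ)
    (hα0 : ∀ i j, 0 ≤ α i j)
    (hαexp : ∀ (i : Fin (s+1)) (j : Fin s), (i : ℕ) ≤ (j : ℕ) → α i j = 0)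
    (hαrow : ∀ i, ∑ j, α i j ≤ 1)
    (A : Matrix (Fin s) (Fin s) ℂ) (hA : ∀ i j, A i j = (α i.castSucc j : ℂ))
    (b : Fin s → ℂ) (hb : ∀ j, b j = (α (Fin.last s) j : ℂ))
    (Q : ℂ → Fin s → ℂ)
    (hQ : ∀ z, Q z = fun j =>
      (1 + z / C) * Matrix.vecMul b (∑ k ∈ Finset.range s, (1 + z / C) ^ k • A ^ k) j)
    (z : ℂ) (hz : ‖z + (C : ℂ)‖ ≤ C) (j : Fin s) :
    ‖Q z j‖ ≤ 1 :=
  ssp_internal_stability_on_disk_general s C hC α hα0 hαexp hαrow A hA b hb Q hQ z hz j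
end

section
/- Let s ≥ 2 be an integer. For z ∈ ℂ set ν(z) = 1 + z/(s−1), P(z) = 1/s + ((s−1)/s)·ν(z)^s, and, for each integer j with 2 ≤ j ≤ s, Q_j(z) = ((s−1)/s)·ν(z)^{s−j+1}. Then for every z ∈ ℂ with |P(z)| ≤ 1 and every 2 ≤ j ≤ s one has |Q_j(z)| ≤ (s+1)/s. -/
/-!
Write `Q_j = c ν^k` with `c = (s−1)/s` and `k = s − j + 1 ≤ s`. If `|ν| ≤ 1` then
`|Q_j| ≤ |c| ≤ (s+1)/s`; otherwise `|ν|^k ≤ |ν|^s`, and `c ν^s = P − 1/s` has modulus at most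
`1 + 1/s` on the stability region.
-/

theorem norm_mul_pow_le_max {𝕜 : Type*} [NormedDivisionRing 𝕜] (c w : 𝕜) {k n : ℕ}
    (hkn : k ≤ n) : ‖c * w ^ k‖ ≤ max ‖c‖ ‖c * w ^ n‖ := by
  simp only [norm_mul, norm_pow]
  rcases le_or_gt ‖w‖ 1 with hw | hw
  · exact le_max_of_le_left <|
      mul_le_of_le_one_right (norm_nonneg c) (pow_le_one₀ (norm_nonneg w) hw)
  · exact le_max_of_le_right <| by gcongr; exact hw.le

theorem ssp2_internal_amplification_general
    (s : ℕ) (hs : 2 ≤ s) (z : ℂ)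
    (hz : ‖1 / (s : ℂ) +
      (((s : ℂ) - 1) / s) * (1 + z / ((s : ℂ) - 1)) ^ s‖ ≤ 1)
    (j : ℕ) (hj2 : 2 ≤ j) :
    ‖(((s : ℂ) - 1) / s) * (1 + z / ((s : ℂ) - 1)) ^ (s - j + 1)‖ ≤
      ((s : ℝ) + 1) / s := by
  have hs0 : (s : ℝ) ≠ 0 := Nat.cast_ne_zero.mpr (by omega)
  refine (norm_mul_pow_le_max _ _ (by omega : s - j + 1 ≤ s)).trans (max_le ?_ ?_)
  · rw [norm_div, Complex.norm_natCast]
    gcongr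
    simpa using norm_sub_le (s : ℂ) 1
  · calc _ ≤ ‖1 / (s : ℂ) + (((s : ℂ) - 1) / s) * (1 + z / ((s : ℂ) - 1)) ^ s‖ +
            ‖1 / (s : ℂ)‖ := norm_le_add_norm_add' _ _
      _ ≤ 1 + 1 / s := by gcongr; simp
      _ = ((s : ℝ) + 1) / s := by field_simp

/-- **Theorem 3.3.** For the optimal second order SSP Runge–Kutta method with `s ≥ 2`
stages, with `ν(z) = 1 + z/(s−1)`, stability polynomial
`P(z) = 1/s + ((s−1)/s)·ν(z)^s` and internal stability polynomials
`Q_j(z) = ((s−1)/s)·ν(z)^{s−j+1}` for `2 ≤ j ≤ s`, every `z` in the absolute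
stability region `|P(z)| ≤ 1` satisfies `|Q_j(z)| ≤ (s+1)/s`. -/
theorem ssp2_internal_amplification
    (s : ℕ) (hs : 2 ≤ s) (z : ℂ)
    (hz : ‖1 / (s : ℂ) +
      (((s : ℂ) - 1) / s) * (1 + z / ((s : ℂ) - 1)) ^ s‖ ≤ 1)
    (j : ℕ) (hj2 : 2 ≤ j) (hjs : j ≤ s) :
    ‖(((s : ℂ) - 1) / s) * (1 + z / ((s : ℂ) - 1)) ^ (s - j + 1)‖ ≤
      ((s : ℝ) + 1) / s :=
  ssp2_internal_amplification_general s hs z hz j hj2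
end

section
/- For an integer n ≥ 2 define μ_n^−(ρ) = −1 − (n·ρ^{(n−1)²}·(1 − (1 − 1/n)·ρ^{2n−1}))/(2n−1) for ρ ≥ 1, and set ρ_n = (1 + 1/(n−1))^{1/(2n−1)}. Then μ_n^− has a unique zero ν_n* in the interval [1, +∞); moreover for every ρ ≥ 1, μ_n^−(ρ) < 0 if and only if ρ < ν_n*, μ_n^−(ρ) > 0 if and only if ρ > ν_n*, μ_n^−(ν_n*) = 0, and ν_n* > ρ_n. -/
/-!
On `[1, ∞)` the function `μ_n^−` is, up to a positive factor and the constant `-1`, the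
polynomial `(n - 1) ρ^(n²) - n ρ^((n-1)²)`, whose derivative is positive there since
`(n - 1) n² > n (n - 1)²`. At `ρ_n` the bracket `1 - (1 - 1/n) ρ^(2n-1)` vanishes, so
`μ_n^−(ρ_n) = -1`, while `μ_n^−(2) > 0`. The intermediate value theorem gives the zero `ν_n*`,
and strict monotonicity gives its uniqueness, the sign pattern and `ρ_n < ν_n*`.
-/

open Set

/-- The function `μ_n^−` from the analysis of the optimal third order SSP
Runge–Kutta methods with `n²` stages. -/
noncomputable def munMinus (n : ℕ) (ρ : ℝ) : ℝ :=
  -1 - (n * ρ ^ ((n - 1) ^ 2) * (1 - (1 - 1 / (n : ℝ)) * ρ ^ (2 * n - 1))) / (2 * (n : ℝ) - 1)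

lemma strictMonoOn_mul_pow_sub_mul_pow {a b : ℝ} {p q : ℕ} (hpq : p ≤ q) (hb : 0 ≤ b)
    (h : b * p < a * q) : StrictMonoOn (fun x : ℝ => a * x ^ q - b * x ^ p) (Ici 1) := by
  have hderiv (x : ℝ) : HasDerivAt (fun x : ℝ => a * x ^ q - b * x ^ p)
      (a * (q * x ^ (q - 1)) - b * (p * x ^ (p - 1))) x :=
    ((hasDerivAt_pow q x).const_mul a).sub ((hasDerivAt_pow p x).const_mul b)
  refine strictMonoOn_of_deriv_pos (convex_Ici 1)
    (fun x _ => (hderiv x).continuousAt.continuousWithinAt) fun x hx => ?_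
  rw [interior_Ici, mem_Ioi] at hx
  have hpow : x ^ (p - 1) ≤ x ^ (q - 1) := pow_le_pow_right₀ hx.le (by omega)
  have hbp : 0 ≤ b * p := by positivity
  rw [(hderiv x).deriv]
  calc 0 < (a * q - b * p) * x ^ (p - 1) := by
        have : 0 < x ^ (p - 1) := by positivity
        nlinarith
    _ ≤ a * (q * x ^ (q - 1)) - b * (p * x ^ (p - 1)) := by nlinarith

lemma munMinus_eq {n : ℕ} (hn : 1 ≤ n) (ρ : ℝ) :
    munMinus n ρ = ((n : ℝ) - 1) / (2 * n - 1) * ρ ^ (n ^ 2)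
      - (n : ℝ) / (2 * n - 1) * ρ ^ ((n - 1) ^ 2) - 1 := by
  have hsq : n ^ 2 = (n - 1) ^ 2 + (2 * n - 1) := by
    obtain ⟨k, rfl⟩ : ∃ k, n = k + 1 := ⟨n - 1, by omega⟩
    rw [Nat.add_sub_cancel, show 2 * (k + 1) - 1 = 2 * k + 1 by omega]
    ring
  have hn0 : (n : ℝ) ≠ 0 := by positivity
  rw [munMinus, hsq, pow_add]
  field_simp
  ring

lemma munMinus_strictMonoOn {n : ℕ} (hn : 2 ≤ n) : StrictMonoOn (munMinus n) (Ici 1) := by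
  have hn' : (2 : ℝ) ≤ n := by exact_mod_cast hn
  have hd : (0 : ℝ) < 2 * n - 1 := by linarith
  have hpoly := strictMonoOn_mul_pow_sub_mul_pow (a := ((n : ℝ) - 1) / (2 * n - 1))
    (b := (n : ℝ) / (2 * n - 1)) (Nat.pow_le_pow_left (Nat.sub_le n 1) 2) (by positivity) (by
      rw [div_mul_eq_mul_div, div_mul_eq_mul_div, div_lt_div_iff_of_pos_right hd]
      push_cast [Nat.cast_sub (by omega : 1 ≤ n)]
      nlinarith)
  simpa only [funext (munMinus_eq (by omega : 1 ≤ n)), sub_eq_add_neg _ (1 : ℝ)]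
    using hpoly.add_const (-1)

lemma continuous_munMinus (n : ℕ) : Continuous (munMinus n) := by
  unfold munMinus
  fun_prop

lemma munMinus_two_pos {n : ℕ} (hn : 2 ≤ n) : 0 < munMinus n 2 := by
  have hn' : (2 : ℝ) ≤ n := by exact_mod_cast hn
  have hd : (0 : ℝ) < 2 * n - 1 := by linarith
  have hfactor : 1 / 2 ≤ (n : ℝ) / (2 * n - 1) := by
    rw [div_le_div_iff₀ two_pos hd]; linarith
  have hcoeff : 1 / 2 ≤ 1 - 1 / (n : ℝ) := by
    have : 1 / (n : ℝ) ≤ 1 / 2 := one_div_le_one_div_of_le two_pos hn'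
    linarith
  have hpow : (8 : ℝ) ≤ 2 ^ (2 * n - 1) :=
    calc (8 : ℝ) = 2 ^ 3 := by norm_num
      _ ≤ 2 ^ (2 * n - 1) := pow_le_pow_right₀ one_le_two (by omega)
  have hbracket : 3 ≤ (1 - 1 / (n : ℝ)) * 2 ^ (2 * n - 1) - 1 := by nlinarith
  have hone : (1 : ℝ) ≤ 2 ^ ((n - 1) ^ 2) := one_le_pow₀ one_le_two
  have hform : munMinus n 2 = (n : ℝ) / (2 * n - 1) * 2 ^ ((n - 1) ^ 2)
      * ((1 - 1 / (n : ℝ)) * 2 ^ (2 * n - 1) - 1) - 1 := by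
    rw [munMinus]; ring
  rw [hform]
  have : 1 / 2 ≤ (n : ℝ) / (2 * n - 1) * 2 ^ ((n - 1) ^ 2) := by nlinarith
  nlinarith

noncomputable def rhoN (n : ℕ) : ℝ :=
  (1 + 1 / ((n : ℝ) - 1)) ^ ((1 : ℝ) / (2 * (n : ℝ) - 1))

lemma one_le_rhoN {n : ℕ} (hn : 1 ≤ n) : 1 ≤ rhoN n := by
  have hn' : (1 : ℝ) ≤ n := by exact_mod_cast hn
  exact Real.one_le_rpow (le_add_of_nonneg_right (one_div_nonneg.2 (by linarith)))
    (one_div_nonneg.2 (by linarith))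

lemma rhoN_pow {n : ℕ} (hn : 1 ≤ n) : rhoN n ^ (2 * n - 1) = 1 + 1 / ((n : ℝ) - 1) := by
  have hn' : (1 : ℝ) ≤ n := by exact_mod_cast hn
  have hcast : (2 * (n : ℝ) - 1) = ((2 * n - 1 : ℕ) : ℝ) := by
    push_cast [Nat.cast_sub (by omega : 1 ≤ 2 * n)]; ring
  have hbase : (0 : ℝ) ≤ 1 + 1 / ((n : ℝ) - 1) := by
    have : (0 : ℝ) ≤ 1 / ((n : ℝ) - 1) := one_div_nonneg.2 (by linarith)
    linarith
  rw [rhoN, hcast, one_div ((2 * n - 1 : ℕ) : ℝ), Real.rpow_inv_natCast_pow hbase (by omega)]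

lemma munMinus_rhoN {n : ℕ} (hn : 2 ≤ n) : munMinus n (rhoN n) = -1 := by
  have hn' : (2 : ℝ) ≤ n := by exact_mod_cast hn
  have hbracket : (1 - 1 / (n : ℝ)) * rhoN n ^ (2 * n - 1) = 1 := by
    rw [rhoN_pow (by omega)]
    have : (n : ℝ) - 1 ≠ 0 := by linarith
    field_simp
    ring
  rw [munMinus, hbracket, sub_self, mul_zero, zero_div, sub_zero]

/-- **Lemma 3.11.** For `n ≥ 2`, `μ_n^−` has a unique zero `ν_n*` in `[1, ∞)`,
`μ_n^−(ρ) < 0 ⇔ ρ < ν_n*`, `μ_n^−(ρ) > 0 ⇔ ρ > ν_n*` for `ρ ≥ 1`, and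
`ν_n* > ρ_n = (1 + 1/(n−1))^{1/(2n−1)}`. -/
theorem munMinus_unique_root (n : ℕ) (hn : 2 ≤ n) :
    ∃ ν : ℝ, 1 ≤ ν ∧ munMinus n ν = 0 ∧
      (∀ ρ : ℝ, 1 ≤ ρ → munMinus n ρ = 0 → ρ = ν) ∧
      (∀ ρ : ℝ, 1 ≤ ρ → (munMinus n ρ < 0 ↔ ρ < ν)) ∧
      (∀ ρ : ℝ, 1 ≤ ρ → (0 < munMinus n ρ ↔ ν < ρ)) ∧
      (1 + 1 / ((n : ℝ) - 1)) ^ ((1 : ℝ) / (2 * (n : ℝ) - 1)) < ν := by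
  have hmono := munMinus_strictMonoOn hn
  have hρ : rhoN n ∈ Ici 1 := one_le_rhoN (by omega)
  obtain ⟨ν, hν, hν0⟩ : ∃ ν ∈ Ici (1 : ℝ), munMinus n ν = 0 :=
    isPreconnected_Ici.intermediate_value hρ (by norm_num : (2 : ℝ) ∈ Ici 1)
      (continuous_munMinus n).continuousOn
      ⟨by rw [munMinus_rhoN hn]; norm_num, (munMinus_two_pos hn).le⟩
  have hsign (ρ : ℝ) (hρ : ρ ∈ Ici 1) :
      (munMinus n ρ < 0 ↔ ρ < ν) ∧ (0 < munMinus n ρ ↔ ν < ρ) := by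
    rw [← hν0]
    exact ⟨hmono.lt_iff_lt hρ hν, hmono.lt_iff_lt hν hρ⟩
  refine ⟨ν, hν, hν0, fun ρ hρ h => hmono.injOn hρ hν (h.trans hν0.symm),
    fun ρ hρ => (hsign ρ hρ).1, fun ρ hρ => (hsign ρ hρ).2, ?_⟩
  exact (hsign _ hρ).1.1 (by rw [munMinus_rhoN hn]; norm_num)
end

section
/- Let n ≥ 2 be an integer. Define the scaled stability region S_n^sc = {ν ∈ ℂ : |((n−1)/(2n−1))·ν^{n²} + (n/(2n−1))·ν^{(n−1)²}| ≤ 1} and let μ_n^−(ρ) = −1 − (n·ρ^{(n−1)²}·(1 − (1 − 1/n)·ρ^{2n−1}))/(2n−1). Then sup{|ν| : ν ∈ S_n^sc} equals ν_n*, the unique zero of μ_n^− in the interval [1, +∞). In particular the farthest point of S_n^sc from the origin is attained along the negative real axis. -/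
lemma norm_mul_pow_sub_norm_mul_pow_le {𝕜 : Type*} [NormedDivisionRing 𝕜] (α β w : 𝕜) (m k : ℕ) :
    ‖α‖ * ‖w‖ ^ m - ‖β‖ * ‖w‖ ^ k ≤ ‖α * w ^ m + β * w ^ k‖ := by
  simpa [norm_mul, norm_pow] using norm_sub_norm_le (α * w ^ m) (-(β * w ^ k))

lemma pow_mul_sub_lt_pow_mul_sub {a b x y : ℝ} {p q : ℕ} (ha : 0 < a) (hq : q ≠ 0)
    (hx : 0 < x) (hxy : x < y) (hpos : 0 < x ^ p * (a * x ^ q - b)) :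
    x ^ p * (a * x ^ q - b) < y ^ p * (a * y ^ q - b) := by
  have hxp : 0 < x ^ p := pow_pos hx p
  have hfac : 0 < a * x ^ q - b := pos_of_mul_pos_right hpos hxp.le
  have hfac_lt : a * x ^ q - b < a * y ^ q - b := by gcongr
  calc x ^ p * (a * x ^ q - b) < x ^ p * (a * y ^ q - b) := by gcongr
    _ ≤ y ^ p * (a * y ^ q - b) := by gcongr; linarith

lemma neg_pow_sq {R : Type*} [Monoid R] [HasDistribNeg R] (x : R) (n : ℕ) :
    (-x) ^ (n ^ 2) = (-1) ^ n * x ^ (n ^ 2) := by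
  rw [neg_pow, neg_one_pow_congr (Nat.even_pow' two_ne_zero)]

lemma pred_sq_add_two_mul_sub_one {n : ℕ} (hn : n ≠ 0) : (n - 1) ^ 2 + (2 * n - 1) = n ^ 2 := by
  obtain ⟨m, rfl⟩ := Nat.exists_eq_add_one_of_ne_zero hn
  rw [Nat.add_sub_cancel, show 2 * (m + 1) - 1 = 2 * m + 1 by omega]
  ring

noncomputable def sspStabilityPoly (n : ℕ) (w : ℂ) : ℂ :=
  ((n : ℂ) - 1) / (2 * (n : ℂ) - 1) * w ^ (n ^ 2) + (n : ℂ) / (2 * (n : ℂ) - 1) * w ^ ((n - 1) ^ 2)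

noncomputable def sspRadialProfile (n : ℕ) (r : ℝ) : ℝ :=
  ((n : ℝ) - 1) / (2 * n - 1) * r ^ (n ^ 2) - n / (2 * n - 1) * r ^ ((n - 1) ^ 2)

section
variable {n : ℕ}

lemma sspRadialProfile_eq_pow_mul (hn : n ≠ 0) (r : ℝ) :
    sspRadialProfile n r =
      r ^ ((n - 1) ^ 2) * (((n : ℝ) - 1) / (2 * n - 1) * r ^ (2 * n - 1) - n / (2 * n - 1)) := by
  rw [sspRadialProfile, ← pred_sq_add_two_mul_sub_one hn, pow_add]
  ring

lemma munMinus_eq_sspRadialProfile_sub_one (hn : n ≠ 0) (ρ : ℝ) :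
    munMinus n ρ = sspRadialProfile n ρ - 1 := by
  have hn' : (n : ℝ) ≠ 0 := Nat.cast_ne_zero.mpr hn
  rw [munMinus, sspRadialProfile_eq_pow_mul hn]
  field_simp
  ring

lemma sspRadialProfile_lt_of_lt (hn : 2 ≤ n) {x y : ℝ} (hx : 0 < x) (hxy : x < y)
    (hpos : 0 < sspRadialProfile n x) : sspRadialProfile n x < sspRadialProfile n y := by
  have hn' : (2 : ℝ) ≤ n := by exact_mod_cast hn
  simp only [sspRadialProfile_eq_pow_mul (n := n) (by omega)] at hpos ⊢
  exact pow_mul_sub_lt_pow_mul_sub (by apply div_pos <;> linarith) (by omega) hx hxy hpos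

lemma sspRadialProfile_norm_le (hn : 1 ≤ n) (w : ℂ) :
    sspRadialProfile n ‖w‖ ≤ ‖sspStabilityPoly n w‖ := by
  have hn' : (1 : ℝ) ≤ n := by exact_mod_cast hn
  have hα : ((n : ℂ) - 1) / (2 * (n : ℂ) - 1) = (((n : ℝ) - 1) / (2 * n - 1) : ℝ) := by
    push_cast; rfl
  have hβ : (n : ℂ) / (2 * (n : ℂ) - 1) = ((n : ℝ) / (2 * n - 1) : ℝ) := by push_cast; rfl
  have := norm_mul_pow_sub_norm_mul_pow_le ((((n : ℝ) - 1) / (2 * n - 1) : ℝ) : ℂ)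
    (((n : ℝ) / (2 * n - 1) : ℝ) : ℂ) w (n ^ 2) ((n - 1) ^ 2)
  rwa [Complex.norm_of_nonneg (by apply div_nonneg <;> linarith),
    Complex.norm_of_nonneg (by apply div_nonneg <;> linarith), ← hα, ← hβ] at this

lemma sspStabilityPoly_neg_ofReal (hn : n ≠ 0) (x : ℝ) :
    sspStabilityPoly n (-x) = ((-1) ^ n * sspRadialProfile n x : ℝ) := by
  obtain ⟨m, rfl⟩ := Nat.exists_eq_add_one_of_ne_zero hn
  simp only [sspStabilityPoly, sspRadialProfile, Nat.add_sub_cancel, neg_pow_sq]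
  push_cast
  ring

lemma norm_sspStabilityPoly_neg_ofReal (hn : n ≠ 0) (x : ℝ) :
    ‖sspStabilityPoly n (-x)‖ = |sspRadialProfile n x| := by
  rw [sspStabilityPoly_neg_ofReal hn, Complex.norm_real, Real.norm_eq_abs, abs_mul, abs_pow,
    abs_neg, abs_one, one_pow, one_mul]

lemma norm_le_of_norm_sspStabilityPoly_le_one (hn : 2 ≤ n) {ν : ℝ} (hν : 0 < ν)
    (hroot : sspRadialProfile n ν = 1) {w : ℂ} (hw : ‖sspStabilityPoly n w‖ ≤ 1) : ‖w‖ ≤ ν := by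
  by_contra! hlt
  have := sspRadialProfile_lt_of_lt hn hν hlt (by rw [hroot]; exact one_pos)
  linarith [sspRadialProfile_norm_le (n := n) (by omega) w]

end

theorem ssp3_scaled_region_sup_general (n : ℕ) (hn : 2 ≤ n)
    (S : Set ℂ)
    (hS : S = {w : ℂ | ‖(((n : ℂ) - 1) / (2 * (n : ℂ) - 1)) * w ^ (n ^ 2) +
      ((n : ℂ) / (2 * (n : ℂ) - 1)) * w ^ ((n - 1) ^ 2)‖ ≤ 1})
    (ν : ℝ) (hν1 : 1 ≤ ν) (hν0 : munMinus n ν = 0) :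
    sSup ((fun z : ℂ => ‖z‖) '' S) = ν ∧ ((-ν : ℝ) : ℂ) ∈ S := by
  replace hS : S = {w | ‖sspStabilityPoly n w‖ ≤ 1} := hS
  subst hS
  have hroot : sspRadialProfile n ν = 1 := by
    linarith [munMinus_eq_sspRadialProfile_sub_one (n := n) (by omega) ν]
  have hmem : ((-ν : ℝ) : ℂ) ∈ {w | ‖sspStabilityPoly n w‖ ≤ 1} := by
    change ‖_‖ ≤ 1
    rw [Complex.ofReal_neg, norm_sspStabilityPoly_neg_ofReal (by omega), hroot, abs_one]
  have hnorm : ‖((-ν : ℝ) : ℂ)‖ = ν := by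
    rw [Complex.norm_real, Real.norm_eq_abs, abs_neg, abs_of_nonneg (by linarith)]
  refine ⟨IsGreatest.csSup_eq ⟨⟨_, hmem, hnorm⟩, ?_⟩, hmem⟩
  rintro _ ⟨w, hw, rfl⟩
  exact norm_le_of_norm_sspStabilityPoly_le_one hn (by linarith) hroot hw

/-- **Section 3.2.2 (equations (3.14)–(3.16) with Lemma 3.11).**
For `n ≥ 2`, the supremum of `|ν|` over the scaled stability region
`S_n^sc = {ν : |((n−1)/(2n−1))ν^{n²} + (n/(2n−1))ν^{(n−1)²}| ≤ 1}`
equals `ν_n*`, the unique zero of `μ_n^−` in `[1, ∞)`; moreover the farthest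
point is attained on the negative real axis, i.e. `-ν_n* ∈ S_n^sc`. -/
theorem ssp3_scaled_region_sup (n : ℕ) (hn : 2 ≤ n)
    (S : Set ℂ)
    (hS : S = {w : ℂ | ‖(((n : ℂ) - 1) / (2 * (n : ℂ) - 1)) * w ^ (n ^ 2) +
      ((n : ℂ) / (2 * (n : ℂ) - 1)) * w ^ ((n - 1) ^ 2)‖ ≤ 1})
    (ν : ℝ) (hν1 : 1 ≤ ν) (hν0 : munMinus n ν = 0)
    (huniq : ∀ ρ : ℝ, 1 ≤ ρ → munMinus n ρ = 0 → ρ = ν) :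
    sSup ((fun z : ℂ => ‖z‖) '' S) = ν ∧ ((-ν : ℝ) : ℂ) ∈ S :=
  ssp3_scaled_region_sup_general n hn S hS ν hν1 hν0
end

section
/- Let n ≥ 9 be an integer, define μ_n^−(ρ) = −1 − (n·ρ^{(n−1)²}·(1 − (1 − 1/n)·ρ^{2n−1}))/(2n−1), and let ν_n* be the unique zero of μ_n^− in [1, +∞). Then (9/10)·√(n/ln n) < (ν_n*)^{(n²−n)/2} < √n / (ln n)^{1/16}. -/
/-!
Clearing denominators, `μ_n^−(ρ) = 0` reads `(n - 1) ρ^{n²} - n ρ^{(n-1)²} = 2n - 1`, and the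
left side is increasing in `ρ ≥ 0` wherever it is positive. Substituting `ρ = exp (x / k)` with
`k = n(n-1)/2`, so that `ρ^k = exp x`, turns the left side into
`e^{2x} ((n - 1) e^{2x/(n-1)} - n e^{-2x/n})`, and second order Taylor bounds pin the bracket
between `4x - 1` and `4x - 1 + 4x²/(n - 1)`. Hence the root satisfies `e^{2x} (4x - 1) ≈ 2n`, that
is `x ≈ (log n - log log n) / 2`, and the two bounds come from evaluating the sign at
`x = log (9/10 · √(n / log n))` and at `x = log (√n / (log n)^{1/16})`.
-/

open Real

lemma exp_neg_le_quadratic {b : ℝ} (hb : 0 ≤ b) : exp (-b) ≤ 1 - b + b ^ 2 / 2 := by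
  rw [exp_neg, inv_le_iff_one_le_mul₀ (exp_pos b)]
  have hq : 0 ≤ 1 - b + b ^ 2 / 2 := by nlinarith [sq_nonneg (b - 1)]
  nlinarith [mul_le_mul_of_nonneg_left (quadratic_le_exp_of_nonneg hb) hq, sq_nonneg (b ^ 2)]

lemma exp_le_one_add_add_sq {a : ℝ} (ha : |a| ≤ 1) : exp a ≤ 1 + a + a ^ 2 := by
  linarith [(abs_le.mp (abs_exp_sub_one_sub_id_le ha)).2]

lemma seven_lt_exp_two : 7 < exp 2 := by
  have h : exp 2 = exp 1 ^ 2 := by rw [← exp_nat_mul]; norm_num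
  nlinarith [exp_one_gt_d9]

lemma exp_two_lt_nine : exp 2 < 9 := by
  have h : exp 2 = exp 1 ^ 2 := by rw [← exp_nat_mul]; norm_num
  nlinarith [exp_one_lt_d9, exp_pos 1]

lemma two_lt_log_of_nine_le {N : ℝ} (hN : 9 ≤ N) : 2 < log N := by
  rw [lt_log_iff_exp_lt (by linarith)]
  linarith [exp_two_lt_nine]

lemma log_le_three_mul_sub_one_div_ten {N : ℝ} (hN : 9 ≤ N) : log N ≤ 3 * (N - 1) / 10 := by
  have hN0 : 0 < N := by linarith
  have h7 := seven_lt_exp_two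
  have htan : log N ≤ 1 + N / exp 2 := by
    have := log_le_sub_one_of_pos (div_pos hN0 (exp_pos 2))
    rw [log_div hN0.ne' (exp_pos 2).ne', log_exp] at this
    linarith
  have hdiv : N / exp 2 ≤ N / 7 := div_le_div_of_nonneg_left hN0.le (by norm_num) h7.le
  linarith

lemma cast_sq_sub_self_div_two (n : ℕ) : (((n ^ 2 - n) / 2 : ℕ) : ℝ) = n * (n - 1) / 2 := by
  rw [sq, ← Nat.mul_sub_one, ← Nat.choose_two_right, Nat.cast_choose_two]

lemma sq_sub_self_div_two_ne_zero {n : ℕ} (hn : 2 ≤ n) : (n ^ 2 - n) / 2 ≠ 0 := by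
  rw [sq, ← Nat.mul_sub_one, ← Nat.choose_two_right]
  exact (Nat.choose_pos hn).ne'

noncomputable def ssp3Poly (n : ℕ) (ρ : ℝ) : ℝ :=
  (n - 1) * ρ ^ (n ^ 2) - n * ρ ^ ((n - 1) ^ 2)

noncomputable def ssp3ExpFactor (N x : ℝ) : ℝ :=
  (N - 1) * exp (2 * x / (N - 1)) - N * exp (-(2 * x / N))

section
variable {n : ℕ}

lemma sq_eq_sub_one_sq_add_two_mul_sub_one (hn : 1 ≤ n) : n ^ 2 = (n - 1) ^ 2 + (2 * n - 1) := by
  zify [hn, show 1 ≤ 2 * n by omega]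
  ring

lemma ssp3Poly_eq_mul (hn : 1 ≤ n) (ρ : ℝ) :
    ssp3Poly n ρ = ρ ^ ((n - 1) ^ 2) * ((n - 1) * ρ ^ (2 * n - 1) - n) := by
  rw [ssp3Poly, sq_eq_sub_one_sq_add_two_mul_sub_one hn, pow_add]
  ring

lemma ssp3Poly_eq_of_munMinus_eq_zero (hn : 1 ≤ n) {ρ : ℝ} (h : munMinus n ρ = 0) :
    ssp3Poly n ρ = 2 * n - 1 := by
  have hn' : (1 : ℝ) ≤ n := by exact_mod_cast hn
  rw [munMinus, sub_eq_zero, eq_div_iff (by linarith)] at h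
  rw [ssp3Poly_eq_mul hn]
  field_simp at h
  linear_combination h

lemma ssp3Poly_le_of_le (hn : 1 ≤ n) {x y : ℝ} (hx : 0 ≤ x) (hxy : x ≤ y)
    (hpos : 0 < ssp3Poly n x) : ssp3Poly n x ≤ ssp3Poly n y := by
  rw [ssp3Poly_eq_mul hn] at hpos
  rw [ssp3Poly_eq_mul hn, ssp3Poly_eq_mul hn]
  have hfac : 0 < (n - 1) * x ^ (2 * n - 1) - n := pos_of_mul_pos_right hpos (by positivity)
  have hn' : (0 : ℝ) ≤ n - 1 := by
    have : (1 : ℝ) ≤ n := by exact_mod_cast hn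
    linarith
  exact mul_le_mul (by gcongr) (by gcongr) hfac.le (pow_nonneg (hx.trans hxy) _)

lemma ssp3Poly_exp_div (hn : 2 ≤ n) (x : ℝ) :
    ssp3Poly n (exp (x / ((n ^ 2 - n) / 2 : ℕ))) = exp (2 * x) * ssp3ExpFactor n x := by
  have hn' : (2 : ℝ) ≤ n := by exact_mod_cast hn
  have hN1 : (n : ℝ) - 1 ≠ 0 := by linarith
  have hN0 : (n : ℝ) ≠ 0 := by linarith
  have hsq : (((n ^ 2 : ℕ) : ℝ)) * (x / (n * (n - 1) / 2)) = 2 * x + 2 * x / (n - 1) := by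
    push_cast
    field_simp
    ring
  have hsub_sq : (((n - 1) ^ 2 : ℕ) : ℝ) * (x / (n * (n - 1) / 2)) = 2 * x + -(2 * x / n) := by
    push_cast [show 1 ≤ n by omega]
    field_simp
    ring
  rw [ssp3Poly, ssp3ExpFactor, ← exp_nat_mul, ← exp_nat_mul, cast_sq_sub_self_div_two, hsq,
    hsub_sq, exp_add, exp_add]
  ring

end

section
variable {n : ℕ} {ν : ℝ}

lemma pow_lt_exp_of_lt_ssp3Poly (hn : 2 ≤ n) (hν : 0 ≤ ν) (hνeq : ssp3Poly n ν = 2 * n - 1)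
    {x : ℝ} (hx : 2 * n - 1 < exp (2 * x) * ssp3ExpFactor n x) :
    ν ^ ((n ^ 2 - n) / 2) < exp x := by
  set k := (n ^ 2 - n) / 2
  have hk : k ≠ 0 := sq_sub_self_div_two_ne_zero hn
  have hn1 : 1 ≤ n := by omega
  have hn1' : (1 : ℝ) ≤ n := by exact_mod_cast hn1
  rw [← ssp3Poly_exp_div hn] at hx
  have hlt : ν < exp (x / k) := by
    by_contra! hle
    linarith [ssp3Poly_le_of_le hn1 (exp_pos _).le hle (by linarith)]
  calc ν ^ k < exp (x / k) ^ k := pow_lt_pow_left₀ hlt hν hk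
    _ = exp x := by rw [← exp_nat_mul]; field_simp

lemma exp_lt_pow_of_ssp3Poly_lt (hn : 2 ≤ n) (hν : 0 ≤ ν) (hνeq : ssp3Poly n ν = 2 * n - 1)
    {x : ℝ} (hx : exp (2 * x) * ssp3ExpFactor n x < 2 * n - 1) :
    exp x < ν ^ ((n ^ 2 - n) / 2) := by
  set k := (n ^ 2 - n) / 2
  have hk : k ≠ 0 := sq_sub_self_div_two_ne_zero hn
  have hn1 : 1 ≤ n := by omega
  have hn1' : (1 : ℝ) ≤ n := by exact_mod_cast hn1
  rw [← ssp3Poly_exp_div hn] at hx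
  have hlt : exp (x / k) < ν := by
    by_contra! hle
    linarith [ssp3Poly_le_of_le hn1 hν hle (by linarith)]
  calc exp x = exp (x / k) ^ k := by rw [← exp_nat_mul]; field_simp
    _ < ν ^ k := pow_lt_pow_left₀ hlt (exp_pos _).le hk

end

section
variable {N x : ℝ}

lemma four_mul_sub_one_le_ssp3ExpFactor (hN : 1 < N) (hx : 0 ≤ x) :
    4 * x - 1 ≤ ssp3ExpFactor N x := by
  have hN1 : 0 < N - 1 := by linarith
  have hlo : (N - 1) * (1 + 2 * x / (N - 1) + (2 * x / (N - 1)) ^ 2 / 2)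
      ≤ (N - 1) * exp (2 * x / (N - 1)) := by
    gcongr
    exact quadratic_le_exp_of_nonneg (by positivity)
  have hhi : N * exp (-(2 * x / N)) ≤ N * (1 - 2 * x / N + (2 * x / N) ^ 2 / 2) := by
    gcongr
    exact exp_neg_le_quadratic (by positivity)
  have hsq : 2 * x ^ 2 / N ≤ 2 * x ^ 2 / (N - 1) := by gcongr; linarith
  have hexpand : (N - 1) * (1 + 2 * x / (N - 1) + (2 * x / (N - 1)) ^ 2 / 2)
      - N * (1 - 2 * x / N + (2 * x / N) ^ 2 / 2)
      = 4 * x - 1 + (2 * x ^ 2 / (N - 1) - 2 * x ^ 2 / N) := by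
    field_simp
    ring
  rw [ssp3ExpFactor]
  linarith

lemma ssp3ExpFactor_le (hN : 1 < N) (hx : 0 ≤ x) (hxN : 2 * x ≤ N - 1) :
    ssp3ExpFactor N x ≤ 4 * x - 1 + 4 * x ^ 2 / (N - 1) := by
  have hN1 : 0 < N - 1 := by linarith
  have hhi : (N - 1) * exp (2 * x / (N - 1))
      ≤ (N - 1) * (1 + 2 * x / (N - 1) + (2 * x / (N - 1)) ^ 2) := by
    gcongr
    refine exp_le_one_add_add_sq (abs_le.mpr ⟨?_, ?_⟩)
    · have : 0 ≤ 2 * x / (N - 1) := by positivity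
      linarith
    · rwa [div_le_one hN1]
  have hlo : N * (1 - 2 * x / N) ≤ N * exp (-(2 * x / N)) := by
    gcongr
    linarith [add_one_le_exp (-(2 * x / N))]
  have hexpand : (N - 1) * (1 + 2 * x / (N - 1) + (2 * x / (N - 1)) ^ 2) - N * (1 - 2 * x / N)
      = 4 * x - 1 + 4 * x ^ 2 / (N - 1) := by
    field_simp
    ring
  rw [ssp3ExpFactor]
  linarith

end

section
variable {N : ℝ}

lemma two_mul_sub_one_lt_exp_mul_ssp3ExpFactor (hN : 9 ≤ N) :
    2 * N - 1 < exp (2 * (log N / 2 - log (log N) / 16))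
      * ssp3ExpFactor N (log N / 2 - log (log N) / 16) := by
  set t := log N
  set u := t / 2 - log t / 16 with hu_def
  have ht : 2 < t := two_lt_log_of_nine_le hN
  have hlogt : log t ≤ t - 1 := log_le_sub_one_of_pos (by linarith)
  have hu : 0 ≤ u := by linarith
  have hexp : exp (2 * u) * t ^ (1 / 8 : ℝ) = N := by
    rw [rpow_def_of_pos (by linarith), ← exp_add, hu_def]
    ring_nf
    exact exp_log (by linarith)
  have hroot : t ^ (1 / 8 : ℝ) ≤ 1 + (t - 1) / 8 := by
    have := rpow_one_add_le_one_add_mul_self (s := t - 1) (by linarith)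
      (p := 1 / 8) (by norm_num) (by norm_num)
    rw [add_sub_cancel] at this
    linarith
  calc 2 * N - 1 < exp (2 * u) * (2 * t ^ (1 / 8 : ℝ)) := by linarith
    _ ≤ exp (2 * u) * (4 * u - 1) := by gcongr; linarith
    _ ≤ exp (2 * u) * ssp3ExpFactor N u := by
      gcongr
      exact four_mul_sub_one_le_ssp3ExpFactor (by linarith) hu

lemma exp_mul_ssp3ExpFactor_lt_two_mul_sub_one (hN : 9 ≤ N) :
    exp (2 * ((log N - log (log N)) / 2 + log (9 / 10)))
      * ssp3ExpFactor N ((log N - log (log N)) / 2 + log (9 / 10)) < 2 * N - 1 := by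
  set t := log N with ht_def
  set v := (t - log t) / 2 + log (9 / 10) with hv_def
  have ht : 2 < t := two_lt_log_of_nine_le hN
  have htN : t ≤ 3 * (N - 1) / 10 := log_le_three_mul_sub_one_div_ten hN
  have hlogt : log t ≤ t - 1 := log_le_sub_one_of_pos (by linarith)
  have hlogt_pos : 0 < log t := log_pos (by linarith)
  have hl910 : -(1 / 9) ≤ log (9 / 10) := by
    have := one_sub_inv_le_log_of_pos (show (0 : ℝ) < 9 / 10 by norm_num)
    norm_num at this ⊢
    linarith
  have hl910_neg : log (9 / 10) < 0 := log_neg (by norm_num) (by norm_num)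
  have hv : 0 ≤ v := by linarith
  have hvt : v ≤ t / 2 := by linarith
  have hN1 : 0 < N - 1 := by linarith
  have hsq : 4 * v ^ 2 / (N - 1) ≤ 3 * t / 10 := by
    rw [div_le_iff₀ hN1]
    nlinarith
  have hexp : exp (2 * v) = 81 / 100 * (N / t) := by
    rw [hv_def, show 2 * ((t - log t) / 2 + log (9 / 10)) = t - log t + 2 * log (9 / 10) by ring,
      exp_add, exp_sub, ← log_rpow (by norm_num), exp_log (by positivity), exp_log (by linarith),
      ht_def, exp_log (by linarith)]
    norm_num
    ring
  calc exp (2 * v) * ssp3ExpFactor N v ≤ exp (2 * v) * (4 * v - 1 + 4 * v ^ 2 / (N - 1)) := by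
        gcongr
        exact ssp3ExpFactor_le (by linarith) hv (by linarith)
    _ < exp (2 * v) * (23 / 10 * t) := by gcongr; linarith
    _ = 1863 / 1000 * N := by rw [hexp]; field_simp; ring
    _ ≤ 2 * N - 1 := by linarith

lemma exp_half_log_sub_eq_sqrt_div_rpow (hN : 0 < N) {t : ℝ} (ht : 0 < t) :
    exp (log N / 2 - log t / 16) = √N / t ^ (1 / 16 : ℝ) := by
  rw [exp_sub, sqrt_eq_rpow, rpow_def_of_pos hN, rpow_def_of_pos ht]
  ring_nf

lemma exp_half_log_sub_add_eq_mul_sqrt (hN : 0 < N) {t c : ℝ} (ht : 0 < t) (hc : 0 < c) :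
    exp ((log N - log t) / 2 + log c) = c * √(N / t) := by
  rw [exp_add, exp_log hc, sqrt_eq_rpow, rpow_def_of_pos (by positivity),
    log_div hN.ne' ht.ne', mul_comm]
  ring_nf

end

theorem ssp3_amplification_bounds_general (n : ℕ) (hn : 9 ≤ n)
    (ν : ℝ) (hν1 : 1 ≤ ν) (hν0 : munMinus n ν = 0) :
    (9 / 10) * Real.sqrt ((n : ℝ) / Real.log n) < ν ^ ((n ^ 2 - n) / 2) ∧
      ν ^ ((n ^ 2 - n) / 2) < Real.sqrt n / Real.log n ^ ((1 : ℝ) / 16) := by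
  have hN : (9 : ℝ) ≤ n := by exact_mod_cast hn
  have hlog : 0 < log n := by linarith [two_lt_log_of_nine_le hN]
  have hν : 0 ≤ ν := by linarith
  have hroot := ssp3Poly_eq_of_munMinus_eq_zero (by omega) hν0
  constructor
  · rw [← exp_half_log_sub_add_eq_mul_sqrt (by linarith) hlog (by norm_num)]
    exact exp_lt_pow_of_ssp3Poly_lt (by omega) hν hroot
      (exp_mul_ssp3ExpFactor_lt_two_mul_sub_one hN)
  · rw [← exp_half_log_sub_eq_sqrt_div_rpow (by linarith) hlog]
    exact pow_lt_exp_of_lt_ssp3Poly (by omega) hν hroot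
      (two_mul_sub_one_lt_exp_mul_ssp3ExpFactor hN)

/-- **Theorem 3.5 (quantitative part).** For `n ≥ 9`, the maximum internal
amplification factor `(ν_n*)^{(n²−n)/2}` of the optimal `n²`-stage third order
SSP Runge–Kutta method satisfies
`(9/10)·√(n/ln n) < (ν_n*)^{(n²−n)/2} < √n / (ln n)^{1/16}`,
where `ν_n*` is the unique zero of `μ_n^−` in `[1, ∞)`. -/
theorem ssp3_amplification_bounds (n : ℕ) (hn : 9 ≤ n)
    (ν : ℝ) (hν1 : 1 ≤ ν) (hν0 : munMinus n ν = 0)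
    (huniq : ∀ ρ : ℝ, 1 ≤ ρ → munMinus n ρ = 0 → ρ = ν) :
    (9 / 10) * Real.sqrt ((n : ℝ) / Real.log n) < ν ^ ((n ^ 2 - n) / 2) ∧
      ν ^ ((n ^ 2 - n) / 2) < Real.sqrt n / Real.log n ^ ((1 : ℝ) / 16) :=
  ssp3_amplification_bounds_general n hn ν hν1 hν0
end

section
/- Let n ≥ 2 be an integer, define μ_n^−(ρ) = −1 − (n·ρ^{(n−1)²}·(1 − (1 − 1/n)·ρ^{2n−1}))/(2n−1), and let ν_n* be the unique zero of μ_n^− in [1, +∞). Then 1 + (ln n)/n² − (ln(ln n))/n² < ν_n*. -/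
open Real

lemma sub_one_sq_add_two_mul_sub_one {n : ℕ} (hn : 1 ≤ n) :
    (n - 1) ^ 2 + (2 * n - 1) = n ^ 2 := by
  obtain ⟨m, rfl⟩ := Nat.exists_eq_add_of_le' hn
  rw [Nat.add_sub_cancel, show 2 * (m + 1) - 1 = 2 * m + 1 by omega]
  ring

lemma munMinus_eq_zero_iff {n : ℕ} (hn : 1 ≤ n) (ρ : ℝ) :
    munMinus n ρ = 0 ↔ (n - 1) * ρ ^ (n ^ 2) - n * ρ ^ ((n - 1) ^ 2) = 2 * (n : ℝ) - 1 := by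
  have hden : 2 * (n : ℝ) - 1 ≠ 0 := by
    have : (1 : ℝ) ≤ n := by exact_mod_cast hn
    linarith
  have hrepr : munMinus n ρ =
      ((n - 1) * ρ ^ (n ^ 2) - n * ρ ^ ((n - 1) ^ 2) - (2 * n - 1)) / (2 * (n : ℝ) - 1) := by
    rw [munMinus, ← sub_one_sq_add_two_mul_sub_one hn, pow_add, eq_div_iff hden,
      sub_mul, div_mul_cancel₀ _ hden]
    field_simp
    ring
  rw [hrepr, div_eq_zero_iff, or_iff_left hden, sub_eq_zero]

lemma pow_le_exp_mul_of_le_one_add {ρ x : ℝ} (hρ : 0 ≤ ρ) (h : ρ ≤ 1 + x) (k : ℕ) :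
    ρ ^ k ≤ exp (k * x) :=
  calc ρ ^ k ≤ exp x ^ k := pow_le_pow_left₀ hρ (h.trans (by linarith [add_one_le_exp x])) k
    _ = exp (k * x) := (exp_nat_mul x k).symm

lemma one_sub_mul_le_inv_pow_of_le_one_add {ρ x : ℝ} (hρ : 0 < ρ) (h : ρ ≤ 1 + x) (k : ℕ) :
    1 - k * x ≤ (ρ ^ k)⁻¹ :=
  calc 1 - k * x ≤ exp (-(k * x)) := by linarith [add_one_le_exp (-(k * x))]
    _ = (exp (k * x))⁻¹ := exp_neg _
    _ ≤ (ρ ^ k)⁻¹ := inv_anti₀ (by positivity) (pow_le_exp_mul_of_le_one_add hρ.le h k)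

lemma sub_one_mul_pow_sq_sub_le {n : ℕ} (hn : 1 ≤ n) {ρ t : ℝ} (hρ : 0 < ρ)
    (h : ρ ≤ 1 + t / (n : ℝ) ^ 2) :
    (n - 1) * ρ ^ (n ^ 2) - n * ρ ^ ((n - 1) ^ 2) ≤
      ρ ^ (n ^ 2) * ((2 * n - 1) * t / n - 1) := by
  have hk : ((2 * n - 1 : ℕ) : ℝ) = 2 * n - 1 := by
    rw [Nat.cast_sub (by omega)]
    push_cast
    ring
  have hinv := one_sub_mul_le_inv_pow_of_le_one_add hρ h (2 * n - 1)
  rw [hk] at hinv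
  have hsplit : ρ ^ ((n - 1) ^ 2) = ρ ^ (n ^ 2) * (ρ ^ (2 * n - 1))⁻¹ := by
    rw [← sub_one_sq_add_two_mul_sub_one hn, pow_add, mul_inv_cancel_right₀ (by positivity)]
  have hP : 0 ≤ (n : ℝ) * ρ ^ (n ^ 2) := by positivity
  calc (n - 1) * ρ ^ (n ^ 2) - n * ρ ^ ((n - 1) ^ 2)
      = (n - 1) * ρ ^ (n ^ 2) - n * ρ ^ (n ^ 2) * (ρ ^ (2 * n - 1))⁻¹ := by rw [hsplit]; ring
    _ ≤ (n - 1) * ρ ^ (n ^ 2) - n * ρ ^ (n ^ 2) * (1 - (2 * n - 1) * (t / n ^ 2)) := by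
      gcongr
    _ = ρ ^ (n ^ 2) * ((2 * n - 1) * t / n - 1) := by field_simp; ring

lemma neg_half_lt_log_log {x : ℝ} (hx : 2 ≤ x) : -(1 / 2) < log (log x) := by
  have hexp : exp (-(1 / 2)) < 2 / 3 := by
    rw [exp_neg, inv_lt_comm₀ (exp_pos _) (by norm_num)]
    linarith [add_one_lt_exp (show (1 / 2 : ℝ) ≠ 0 by norm_num)]
  have hlog2 : exp (-(1 / 2)) < log 2 := by linarith [log_two_gt_d9]
  calc -(1 / 2) = log (exp (-(1 / 2))) := (log_exp _).symm
    _ < log (log 2) := log_lt_log (exp_pos _) hlog2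
    _ ≤ log (log x) := log_le_log (log_pos (by norm_num)) (log_le_log (by norm_num) hx)

lemma exp_log_sub_log_log_mul_lt {N : ℝ} (hN : 2 ≤ N) :
    exp (log N - log (log N)) * ((2 * N - 1) * (log N - log (log N)) / N - 1) < 2 * N - 1 := by
  have hN₀ : 0 < N := by linarith
  have hL : 0 < log N := log_pos (by linarith)
  rw [exp_sub, exp_log hN₀, exp_log hL, div_mul_eq_mul_div, div_lt_iff₀ hL]
  -- after clearing denominators the claim reads `-(2N - 1) ln ln N < N`
  have := neg_half_lt_log_log hN
  field_simp
  nlinarith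

theorem nunstar_lower_bound_general (n : ℕ) (hn : 2 ≤ n)
    (ν : ℝ) (hν1 : 1 ≤ ν) (hν0 : munMinus n ν = 0) :
    1 + Real.log n / (n : ℝ) ^ 2 - Real.log (Real.log n) / (n : ℝ) ^ 2 < ν := by
  set t := log n - log (log n) with ht
  have hN : (2 : ℝ) ≤ n := by exact_mod_cast hn
  have hν : 0 < ν := by linarith
  by_contra! hle
  have hνt : ν ≤ 1 + t / (n : ℝ) ^ 2 := by rw [ht, sub_div]; linarith
  have hpow : ν ^ (n ^ 2) ≤ exp t := by
    have := pow_le_exp_mul_of_le_one_add hν.le hνt (n ^ 2)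
    rwa [Nat.cast_pow, mul_div_cancel₀ _ (by positivity)] at this
  have ht₁ : 1 ≤ t := by
    linarith [log_le_sub_one_of_pos (log_pos (by linarith : (1 : ℝ) < n))]
  have hfactor : 0 ≤ (2 * n - 1) * t / n - 1 := by
    rw [sub_nonneg, le_div_iff₀ (by positivity)]
    nlinarith
  have hroot := (munMinus_eq_zero_iff (by omega) ν).1 hν0
  have hlhs := sub_one_mul_pow_sq_sub_le (by omega) hν hνt
  have hrhs := mul_le_mul_of_nonneg_right hpow hfactor
  linarith [exp_log_sub_log_log_mul_lt hN]

/-- **Lemma 3.13 (lower bound).** For `n ≥ 2`, the unique zero `ν_n*` of `μ_n^−` in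
`[1, ∞)` satisfies `1 + (ln n)/n² − ln(ln n)/n² < ν_n*`. -/
theorem nunstar_lower_bound (n : ℕ) (hn : 2 ≤ n)
    (ν : ℝ) (hν1 : 1 ≤ ν) (hν0 : munMinus n ν = 0)
    (huniq : ∀ ρ : ℝ, 1 ≤ ρ → munMinus n ρ = 0 → ρ = ν) :
    1 + Real.log n / (n : ℝ) ^ 2 - Real.log (Real.log n) / (n : ℝ) ^ 2 < ν :=
  nunstar_lower_bound_general n hn ν hν1 hν0
end

section
/- For every integer n ≥ 9 one has (1 + (ln n)/n² − (ln(ln n))/(8n²))^{(n²−n)/2} < √n / (ln n)^{1/16}. -/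
/-! With `x = ln n / n² − ln ln n / (8n²) > 0` and `m = ⌊(n² − n)/2⌋ < n²/2`, one has
`(1 + x)^m ≤ exp (m x) < exp (n² x / 2) = exp (ln n / 2 − ln ln n / 16)`, and the last
expression is exactly `√n / (ln n)^{1/16}`. -/

open Real

lemma one_add_pow_le_exp_nat_mul {x : ℝ} (hx : -1 ≤ x) (m : ℕ) :
    (1 + x) ^ m ≤ exp (m * x) := by
  rw [exp_nat_mul]
  exact pow_le_pow_left₀ (by linarith) (by linarith [add_one_le_exp x]) m

lemma sqrt_div_rpow_eq_exp {a b : ℝ} (ha : 0 < a) (hb : 0 < b) (q : ℝ) :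
    √a / b ^ q = exp (log a / 2 - q * log b) := by
  rw [sqrt_eq_rpow, rpow_def_of_pos ha, rpow_def_of_pos hb, ← exp_sub]
  ring_nf

lemma log_log_lt_log {x : ℝ} (hx : 1 < x) : log (log x) < log x := by
  linarith [log_le_sub_one_of_pos (log_pos hx)]

lemma two_mul_half_sq_sub_self_lt_sq {n : ℕ} (hn : 0 < n) : 2 * ((n ^ 2 - n) / 2) < n ^ 2 := by
  have : 0 < n ^ 2 := by positivity
  omega

/-- **Lemma 3.18, inequality (3.18).** For every integer `n ≥ 9`,
`(1 + (ln n)/n² − ln(ln n)/(8n²))^{(n²−n)/2} < √n / (ln n)^{1/16}`. -/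
theorem ssp3_upper_bound_aux (n : ℕ) (hn : 9 ≤ n) :
    (1 + Real.log n / (n : ℝ) ^ 2 - Real.log (Real.log n) / (8 * (n : ℝ) ^ 2)) ^
        ((n ^ 2 - n) / 2) <
      Real.sqrt n / Real.log n ^ ((1 : ℝ) / 16) := by
  have hn1 : (1 : ℝ) < n := by exact_mod_cast (show 1 < n by omega)
  set m := (n ^ 2 - n) / 2
  set x := log n / (n : ℝ) ^ 2 - log (log n) / (8 * (n : ℝ) ^ 2) with hx_def
  have hx : 0 < x := by
    have hx_eq : x = (8 * log n - log (log n)) / (8 * (n : ℝ) ^ 2) := by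
      rw [hx_def]
      field_simp
    rw [hx_eq]
    exact div_pos (by linarith [log_log_lt_log hn1, log_pos hn1]) (by positivity)
  have hm : (m : ℝ) < (n : ℝ) ^ 2 / 2 := by
    have h2m : (2 * m : ℝ) < (n : ℝ) ^ 2 := by
      exact_mod_cast two_mul_half_sq_sub_self_lt_sq (show 0 < n by omega)
    linarith
  rw [sqrt_div_rpow_eq_exp (by linarith) (log_pos hn1), add_sub_assoc, ← hx_def]
  calc (1 + x) ^ m ≤ exp (m * x) := one_add_pow_le_exp_nat_mul (by linarith) m
    _ < exp ((n : ℝ) ^ 2 / 2 * x) := exp_lt_exp.2 (mul_lt_mul_of_pos_right hm hx)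
    _ = exp (log n / 2 - 1 / 16 * log (log n)) := by
      rw [hx_def]
      congr 1
      field_simp
      ring
end

section
/- For every integer n ≥ 9 one has (9/10)·√(n/ln n) < (1 + (ln n)/n² − (ln(ln n))/n²)^{(n²−n)/2}. -/
private lemma ssp3_aux_poly (s d : ℝ) (hs3 : 3 ≤ s) (hd0 : 0 < d)
    (hdu : d ≤ 0.7358 * s - 0.77) : d * s^2 + d^2 < (s^2)^2 / 5 := by
  have hu : d * s^2 + d^2 ≤ (0.7358*s - 0.77) * s^2 + (0.7358*s - 0.77)^2 := by
    nlinarith [sq_nonneg s, hd0, hdu, hs3]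
  have ht : (0:ℝ) ≤ s - 3 := by linarith
  have key : (0.7358*s - 0.77) * s^2 + (0.7358*s - 0.77)^2 < (s^2)^2 / 5 := by
    nlinarith [pow_nonneg ht 4, pow_nonneg ht 3, pow_nonneg ht 2, ht]
  linarith

private lemma ssp3_aux_main (N d : ℝ) (hn9 : 9 ≤ N) (hd0 : 0 < d)
    (hG : d * N + d^2 < N^2 / 5) :
    (-(1/10) + d/2) * (2 * N^4) < (N^2 - N) * d * (N^2 - d) := by
  have hn0 : (0:ℝ) < N := by linarith
  have hG2 : (d*N + d^2) * N^2 < N^2/5 * N^2 :=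
    mul_lt_mul_of_pos_right hG (by positivity)
  nlinarith [mul_pos (mul_pos hd0 hd0) hn0]



set_option maxHeartbeats 1600000 in
/-- **Lemma 3.18, inequality (3.19).** For every integer `n ≥ 9`,
`(9/10)·√(n/ln n) < (1 + (ln n)/n² − ln(ln n)/n²)^{(n²−n)/2}`. -/
theorem ssp3_lower_bound_aux (n : ℕ) (hn : 9 ≤ n) :
    (9 / 10) * Real.sqrt ((n : ℝ) / Real.log n) <
      (1 + Real.log n / (n : ℝ) ^ 2 - Real.log (Real.log n) / (n : ℝ) ^ 2) ^
        ((n ^ 2 - n) / 2) := by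
  have hn9 : (9:ℝ) ≤ (n:ℝ) := by exact_mod_cast hn
  have hn0 : (0:ℝ) < (n:ℝ) := by linarith
  set N : ℝ := (n:ℝ) with hNdef
  -- lower bound for log : 1 - 1/t ≤ log t
  have hinv : ∀ t : ℝ, 0 < t → 1 - 1/t ≤ Real.log t := by
    intro t ht
    have h := Real.log_le_sub_one_of_pos (inv_pos.mpr ht)
    rw [Real.log_inv] at h
    rw [one_div]
    linarith
  have hlog2 : 0.6931471803 < Real.log 2 := Real.log_two_gt_d9
  set L := Real.log N with hLdef
  clear_value N
  -- L ≥ log 9 ≥ 2.19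
  have hlog9 : (2.19:ℝ) ≤ Real.log 9 := by
    have h8 : Real.log 9 = Real.log 8 + Real.log (9/8) := by
      rw [← Real.log_mul (by norm_num) (by norm_num)]; norm_num
    have h82 : Real.log 8 = 3 * Real.log 2 := by
      rw [show (8:ℝ) = 2^3 by norm_num, Real.log_pow]; push_cast; ring
    have h98 := hinv (9/8) (by norm_num)
    rw [h8, h82]
    norm_num at h98 ⊢
    linarith
  have hL219 : (2.19:ℝ) ≤ L := by
    rw [hLdef]
    exact le_trans hlog9 (Real.log_le_log (by norm_num) hn9)
  set M := Real.log L with hMdef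
  clear_value L
  have hL0 : (0:ℝ) < L := by linarith
  -- M ≥ 0.77
  have hM77 : (0.77:ℝ) ≤ M := by
    have h1 : M = Real.log 2 + Real.log (L/2) := by
      rw [← Real.log_mul (by norm_num) (by positivity), hMdef]
      congr 1
      ring
    have h2 := hinv (L/2) (by positivity)
    have h3 : (1:ℝ)/(L/2) = 2/L := by ring
    have h4 : 2/L ≤ 2/2.19 := by
      apply div_le_div_of_nonneg_left (by norm_num) (by norm_num) hL219
    rw [h3] at h2
    rw [h1]
    have : (1:ℝ) - 2/2.19 ≤ 1 - 2/L := by linarith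
    nlinarith
  -- M < L (indeed M ≤ L - 1)
  have hML : M ≤ L - 1 := hMdef ▸ Real.log_le_sub_one_of_pos hL0
  clear_value M
  set d := L - M with hddef
  have hd1 : (1:ℝ) ≤ d := by rw [hddef]; linarith
  have hd0 : (0:ℝ) < d := by linarith
  clear_value d
  -- s = sqrt N
  set s := Real.sqrt N with hsdef
  have hsn : s^2 = N := by rw [hsdef]; exact Real.sq_sqrt hn0.le
  have hs3 : (3:ℝ) ≤ s := by
    rw [hsdef]
    have h1 : Real.sqrt 9 ≤ Real.sqrt N := Real.sqrt_le_sqrt hn9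
    have h9 : Real.sqrt 9 = 3 := by
      rw [show (9:ℝ) = 3^2 by norm_num, Real.sqrt_sq (by norm_num)]
    linarith
  have hs0 : (0:ℝ) < s := by linarith
  -- L ≤ 0.7358 * s
  have hLs : L ≤ 0.7358 * s := by
    have he : (2.7182818283:ℝ) < Real.exp 1 := Real.exp_one_gt_d9
    have he0 : (0:ℝ) < Real.exp 1 := Real.exp_pos 1
    have h1 : Real.log (s / Real.exp 1) ≤ s / Real.exp 1 - 1 :=
      Real.log_le_sub_one_of_pos (by positivity)
    rw [Real.log_div (ne_of_gt hs0) (Real.exp_ne_zero 1), Real.log_exp] at h1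
    have hlogs : Real.log s ≤ s / Real.exp 1 := by linarith
    have hL2 : L = 2 * Real.log s := by
      rw [hLdef, ← hsn, Real.log_pow]
      push_cast; ring
    have hls0 : 0 ≤ Real.log s := Real.log_nonneg (by linarith)
    rw [le_div_iff₀ he0] at hlogs
    have h2 : 2.7182818283 * Real.log s ≤ s := by nlinarith
    rw [hL2]
    linarith
  clear_value s
  -- key polynomial inequality : d*N + d^2 < N^2/5
  have hdu : d ≤ 0.7358 * s - 0.77 := by rw [hddef]; linarith
  have hG : d * N + d^2 < N^2 / 5 := by
    rw [← hsn]
    exact ssp3_aux_poly s d hs3 hd0 hdu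
  -- the exponent
  have hnn : n ≤ n^2 := Nat.le_self_pow (by norm_num) n
  have heven : Even (n^2 - n) := by
    rw [Nat.even_sub hnn]
    simp [Nat.even_pow]
  obtain ⟨m, hm⟩ := heven
  have hkm : (n^2 - n)/2 = m := by omega
  have hmR : (m:ℝ) = (N^2 - N) / 2 := by
    have h1 : n^2 = 2*m + n := by omega
    have h2 : ((n^2 : ℕ) : ℝ) = ((2*m + n : ℕ) : ℝ) := by rw [h1]
    push_cast at h2
    rw [hNdef]
    linarith
  -- set x
  set x := d / N^2 with hxdef
  have hN2 : (0:ℝ) < N^2 := by positivity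
  have hx0 : (0:ℝ) < x := by rw [hxdef]; positivity
  clear_value x
  have h1x : (0:ℝ) < 1 + x := by linarith
  -- log (1+x) ≥ x - x^2
  have hlog1x : x - x^2 ≤ Real.log (1 + x) := by
    have h2 := hinv (1 + x) h1x
    have h3 : 1/(1+x) ≤ 1 - x + x^2 := by
      rw [div_le_iff₀ h1x]
      nlinarith [pow_nonneg hx0.le 3]
    linarith
  -- key log inequality
  have hkey : Real.log (9/10) + d/2 < (m:ℝ) * Real.log (1 + x) := by
    have hmpos : (0:ℝ) ≤ (m:ℝ) := Nat.cast_nonneg m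
    have hb : (m:ℝ) * (x - x^2) ≤ (m:ℝ) * Real.log (1 + x) :=
      mul_le_mul_of_nonneg_left hlog1x hmpos
    have hlog910 : Real.log (9/10) ≤ -(1/10) := by
      have := Real.log_le_sub_one_of_pos (show (0:ℝ) < 9/10 by norm_num)
      linarith
    have hmain : -(1/10) + d/2 < (m:ℝ) * (x - x^2) := by
      have hexp : (m:ℝ) * (x - x^2) = (N^2 - N) * d * (N^2 - d) / (2 * N^4) := by
        rw [hmR, hxdef]
        field_simp
      rw [hexp, lt_div_iff₀ (by positivity)]
      exact ssp3_aux_main N d hn9 hd0 hG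
    linarith
  -- conclude by exponentiating
  have hbase : 1 + L / N^2 - M / N^2 = 1 + x := by
    rw [hxdef, hddef]; ring
  rw [hkm, hbase]
  have hNL : (0:ℝ) < N / L := by positivity
  have hA : (0:ℝ) < (9/10) * Real.sqrt (N / L) := by
    have := Real.sqrt_pos.mpr hNL
    linarith
  have hB : (0:ℝ) < (1 + x)^m := pow_pos h1x m
  have hlogA : Real.log ((9/10) * Real.sqrt (N / L)) = Real.log (9/10) + d/2 := by
    rw [Real.log_mul (by norm_num) (ne_of_gt (Real.sqrt_pos.mpr hNL)),
      Real.log_sqrt hNL.le, Real.log_div (ne_of_gt hn0) (ne_of_gt hL0),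
      ← hLdef, ← hMdef, hddef]
  have hfin : Real.log ((9/10) * Real.sqrt (N / L)) < Real.log ((1 + x)^m) := by
    rw [hlogA, Real.log_pow]
    exact hkey
  have := Real.exp_lt_exp.mpr hfin
  rwa [Real.exp_log hA, Real.exp_log hB] at this
end

section
/- For every positive integer p and every z ∈ ℂ one has ∑_{m=1}^{p} ((−1)^{m+p} · m^{p−1} / ((p−m)! · (m−1)!)) · (1 + z/m)^m = ∑_{m=0}^{p} z^m/m!. -/
/-! Since `(-1)^(m+p) m^(p-1) / ((p-m)! (m-1)!) = (-1)^(p-m) C(p,m) m^p / p!`, the left side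
is `1/p!` times the `p`-th forward difference at `0` of
`m ↦ m^p (1 + z/m)^m = ∑_k z^k C(m,k) m^(p-k)` (the `m = 0` term vanishes as `p ≥ 1`).
Each `m ↦ C(m,k) m^(p-k)` is a polynomial of degree `p` with leading coefficient `1/k!`,
so its `p`-th forward difference is `p!/k!`. -/

open Finset Polynomial Nat

theorem sum_alternating_choose_mul_descFactorial_mul_pow {n k : ℕ} (hk : k ≤ n) :
    ∑ m ∈ range (n + 1), (-1 : ℤ) ^ (n - m) * n.choose m * (m.descFactorial k * m ^ (n - k)) =
      n ! := by
  set P : ℤ[X] := X ^ (n - k) * descPochhammer ℤ k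
  have hP : P.Monic := (monic_X_pow _).mul (monic_descPochhammer ℤ k)
  have hdeg : P.natDegree = n := by
    rw [(monic_X_pow _).natDegree_mul (monic_descPochhammer ℤ k), natDegree_X_pow,
      descPochhammer_natDegree]
    omega
  have h := congrFun P.fwdDiff_iter_degree_eq_factorial 0
  rw [hP.leadingCoeff, hdeg, one_smul, fwdDiff_iter_eq_sum_shift] at h
  simpa [P, descPochhammer_eval_eq_descFactorial, mul_comm] using h

theorem sum_alternating_choose_div_factorial_mul_choose_mul_pow {K : Type*} [Field K] [CharZero K]
    {n k : ℕ} (hk : k ≤ n) :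
    ∑ m ∈ range (n + 1), (-1 : K) ^ (n - m) * n.choose m / n ! * (m.choose k * m ^ (n - k)) =
      (k ! : K)⁻¹ := by
  have hfact (j : ℕ) : (j ! : K) ≠ 0 := Nat.cast_ne_zero.mpr j.factorial_ne_zero
  have h := congrArg (Int.cast : ℤ → K) (sum_alternating_choose_mul_descFactorial_mul_pow hk)
  simp only [descFactorial_eq_factorial_mul_choose] at h
  push_cast at h
  calc _ = (∑ m ∈ range (n + 1), (-1 : K) ^ (n - m) * n.choose m *
          (k ! * m.choose k * m ^ (n - k))) / (n ! * k !) := by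
        rw [sum_div]
        refine sum_congr rfl fun m _ ↦ ?_
        field_simp [hfact]
    _ = _ := by
        rw [h]
        field_simp [hfact]

theorem pow_mul_one_add_div_pow_eq_sum {K : Type*} [Field K] {x : K} (hx : x ≠ 0) (z : K)
    {m p : ℕ} (hmp : m ≤ p) :
    x ^ p * (1 + z / x) ^ m = ∑ k ∈ range (p + 1), z ^ k * (m.choose k * x ^ (p - k)) := by
  have hsupp : ∀ k ∈ range (p + 1), k ∉ range (m + 1) →
      z ^ k * (m.choose k * x ^ (p - k)) = 0 := by
    intro k _ hk
    rw [choose_eq_zero_of_lt (by simpa using hk)]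
    simp
  rw [← sum_subset (range_subset_range.mpr (by omega)) hsupp, add_comm, add_pow, mul_sum]
  refine sum_congr rfl fun k hk ↦ ?_
  have hkp : k ≤ p := by simp at hk; omega
  rw [one_pow, mul_one, div_pow, ← pow_sub_mul_pow x hkp]
  field_simp

theorem neg_one_pow_mul_pow_div_factorial_mul_factorial_eq {K : Type*} [Field K] [CharZero K]
    {m p : ℕ} (hm : 1 ≤ m) (hmp : m ≤ p) :
    (-1 : K) ^ (m + p) * (m : K) ^ (p - 1) / ((p - m)! * (m - 1)!) =
      (-1) ^ (p - m) * p.choose m / p ! * (m : K) ^ p := by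
  obtain ⟨m, rfl⟩ := Nat.exists_eq_add_of_le' hm
  obtain ⟨q, rfl⟩ := Nat.exists_eq_add_of_le hmp
  have hsign : (-1 : K) ^ (m + 1 + (m + 1 + q)) = (-1) ^ q := by
    rw [show m + 1 + (m + 1 + q) = q + 2 * (m + 1) by ring, pow_add, pow_mul]; simp
  rw [cast_choose K hmp, hsign, show m + 1 + q - 1 = m + q by omega, add_tsub_cancel_left,
    add_tsub_cancel_right, factorial_succ]
  push_cast
  have hfact : ((m + 1 + q)! : K) ≠ 0 := Nat.cast_ne_zero.mpr (factorial_ne_zero _)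
  have hm1 : (m : K) + 1 ≠ 0 := Nat.cast_add_one_ne_zero m
  field_simp
  ring

/-- **Section 4.2, first identity.** For every `p ≥ 1` and `z ∈ ℂ`,
`∑_{m=1}^{p} ((−1)^{m+p} m^{p−1} / ((p−m)!(m−1)!)) (1 + z/m)^m = ∑_{m=0}^{p} z^m/m!`:
the stability polynomial of the order-`p` explicit Euler extrapolation method is
the degree-`p` Taylor polynomial of the exponential. -/
theorem euler_extrapolation_stability_identity (p : ℕ) (hp : 1 ≤ p) (z : ℂ) :
    ∑ m ∈ Finset.Icc 1 p,
        ((-1 : ℂ) ^ (m + p) * (m : ℂ) ^ (p - 1) /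
          ((Nat.factorial (p - m) : ℂ) * (Nat.factorial (m - 1) : ℂ))) *
          (1 + z / m) ^ m =
      ∑ m ∈ Finset.range (p + 1), z ^ m / (Nat.factorial m : ℂ) := by
  set w : ℕ → ℂ := fun m ↦ (-1) ^ (p - m) * p.choose m / (p ! : ℂ)
  set g : ℕ → ℕ → ℂ := fun m k ↦ m.choose k * (m : ℂ) ^ (p - k)
  have hterm : ∀ m ∈ Icc 1 p, (-1 : ℂ) ^ (m + p) * (m : ℂ) ^ (p - 1) /
      ((p - m)! * (m - 1)!) * (1 + z / m) ^ m = w m * ∑ k ∈ range (p + 1), z ^ k * g m k := by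
    intro m hm
    obtain ⟨h1, h2⟩ := mem_Icc.mp hm
    rw [neg_one_pow_mul_pow_div_factorial_mul_factorial_eq h1 h2, mul_assoc,
      pow_mul_one_add_div_pow_eq_sum (Nat.cast_ne_zero.mpr (by omega)) z h2]
  have hg0 : ∀ k ∈ range (p + 1), z ^ k * g 0 k = 0 := by
    intro k _
    rcases k.eq_zero_or_pos with rfl | hk0
    · simp [g, zero_pow (by omega : p ≠ 0)]
    · simp [g, choose_eq_zero_of_lt hk0]
  calc _ = ∑ m ∈ range (p + 1), w m * ∑ k ∈ range (p + 1), z ^ k * g m k := by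
        rw [sum_congr rfl hterm]
        refine sum_subset (fun m hm ↦ by simp at hm ⊢; omega) fun m hm hm' ↦ ?_
        obtain rfl : m = 0 := by simp at hm hm'; omega
        rw [sum_eq_zero hg0, mul_zero]
    _ = ∑ k ∈ range (p + 1), z ^ k * ∑ m ∈ range (p + 1), w m * g m k := by
        simp_rw [mul_sum]
        rw [sum_comm]
        exact sum_congr rfl fun k _ ↦ sum_congr rfl fun m _ ↦ by ring
    _ = _ := sum_congr rfl fun k hk ↦ by
        rw [sum_alternating_choose_div_factorial_mul_choose_mul_pow (by simp at hk; omega),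
          div_eq_mul_inv]
end

section
/- For every positive integer r and every z ∈ ℂ one has ∑_{m=1}^{r} (2·(−1)^r · m^{2r} / ((r−m)! · (r+m)!)) · ( T_{2m}(iz/(2m)) + i · U_{2m−1}(iz/(2m)) ) = ∑_{m=0}^{2r} z^m/m!, where T_ℓ and U_ℓ denote the Chebyshev polynomials of the first and second kind respectively and i is the imaginary unit. -/
/-!
Up to the sign `(-1) ^ m`, the bracket is the stability polynomial of `2m` steps of the explicit
midpoint rule. The Chebyshev differential equations give two-step recurrences for the Taylor
coefficients of `T_{2m}` and `U_{2m-1}` at `0`; from them the coefficient of `z ^ k` comes out as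
`γ_k(1/m²)` for a polynomial `γ_k` of degree `< r` (when `k ≤ 2r`) with `γ_k(0) = 1/k!`.
The weights `2 (-1)^(r+m) m^(2r) / ((r-m)! (r+m)!)` are the Lagrange weights extrapolating from
the nodes `x = 1/m²`, `1 ≤ m ≤ r`, to `x = 0`. They are exact in degree `< r` because the
`2r`-th finite difference of `x ^ (2e)` vanishes for `e < r` and equals `(2r)!` for `e = r`.
Hence the sum is `∑_{k ≤ 2r} γ_k(0) z^k = ∑_{k ≤ 2r} z^k / k!`.
-/

open Finset Polynomial Nat

theorem apply_two_mul_add_eq_prod_mul {M : Type*} [CommMonoid M] {d μ : ℕ → M}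
    (h : ∀ k, d (k + 2) = μ k * d k) (i t : ℕ) :
    d (2 * t + i) = (∏ j ∈ range t, μ (2 * j + i)) * d i := by
  induction t with
  | zero => simp
  | succ t ih =>
    rw [show 2 * (t + 1) + i = 2 * t + i + 2 by ring, h, ih, prod_range_succ, mul_comm _ (μ _),
      mul_assoc]

theorem sum_range_two_mul_add_one_eq_add_sum_Icc {M : Type*} [AddCommMonoid M] (g : ℕ → M)
    (r : ℕ) : ∑ s ∈ range (2 * r + 1), g s = g r + ∑ m ∈ Icc 1 r, (g (r - m) + g (r + m)) := by
  induction r generalizing g with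
  | zero => simp
  | succ r ih =>
    have hshift : ∑ m ∈ Icc 1 r, (g (r - m + 1) + g (r + m + 1)) =
        ∑ m ∈ Icc 1 r, (g (r + 1 - m) + g (r + 1 + m)) :=
      sum_congr rfl fun m hm => by
        have hmr := (mem_Icc.1 hm).2
        rw [show r - m + 1 = r + 1 - m by omega, show r + m + 1 = r + 1 + m by omega]
    rw [show 2 * (r + 1) + 1 = 2 * r + 1 + 1 + 1 by ring, sum_range_succ', sum_range_succ,
      ih (fun s => g (s + 1)), sum_Icc_succ_top (by omega), hshift]
    simp only [Nat.sub_self, show r + 1 + (r + 1) = 2 * r + 1 + 1 by ring]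
    abel

theorem eval_eq_sum_range_iterate_derivative_eval_zero {K : Type*} [Field K] [CharZero K]
    (p : K[X]) {N : ℕ} (hp : p.natDegree ≤ N) (x : K) :
    p.eval x = ∑ k ∈ range (N + 1), (derivative^[k] p).eval 0 / k ! * x ^ k := by
  rw [eval_eq_sum_range' (Nat.lt_succ_of_le hp)]
  refine sum_congr rfl fun k _ => ?_
  rw [← coeff_zero_eq_eval_zero, coeff_iterate_derivative, zero_add, descFactorial_self,
    nsmul_eq_mul, mul_div_cancel_left₀ _ (Nat.cast_ne_zero.2 (factorial_ne_zero k))]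

section Chebyshev

open Chebyshev

variable {R : Type*} [CommRing R]

theorem iterate_derivative_T_two_mul_eval_zero_even (m t : ℕ) :
    (derivative^[2 * t] (T R (2 * m))).eval 0 =
      (-1) ^ m * ∏ j ∈ range t, ((2 * j : R) ^ 2 - (2 * m) ^ 2) := by
  refine (apply_two_mul_add_eq_prod_mul (d := fun k => (derivative^[k] (T R (2 * m))).eval 0)
    (iterate_derivative_T_eval_zero_recurrence (2 * m)) 0 t).trans ?_
  rw [mul_comm]
  simp only [Function.iterate_zero_apply, T_eval_two_mul_zero, Int.cast_negOnePow_natCast]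
  congr 1
  refine prod_congr rfl fun j _ => ?_
  push_cast; ring

theorem iterate_derivative_T_two_mul_eval_zero_odd (m t : ℕ) :
    (derivative^[2 * t + 1] (T R (2 * m))).eval 0 = 0 := by
  rw [apply_two_mul_add_eq_prod_mul (d := fun k => (derivative^[k] (T R (2 * m))).eval 0)
    (iterate_derivative_T_eval_zero_recurrence (2 * m)) 1 t]
  have hodd : Odd (2 * (m : ℤ) - 1) := ⟨m - 1, by ring⟩
  simp [T_derivative_eq_U, U_eval_zero_of_odd R hodd]

theorem iterate_derivative_U_two_mul_sub_one_eval_zero_even (m t : ℕ) :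
    (derivative^[2 * t] (U R (2 * m - 1))).eval 0 = 0 := by
  refine (apply_two_mul_add_eq_prod_mul (d := fun k => (derivative^[k] (U R (2 * m - 1))).eval 0)
    (iterate_derivative_U_eval_zero_recurrence (2 * m - 1)) 0 t).trans ?_
  have hodd : Odd (2 * (m : ℤ) - 1) := ⟨m - 1, by ring⟩
  simp [U_eval_zero_of_odd R hodd]

theorem derivative_U_two_mul_sub_one_eval_zero (m : ℕ) :
    (derivative (U R (2 * m - 1))).eval 0 = -(2 * m * (-1) ^ m) := by
  have h := congr_arg (eval 0) (add_one_mul_T_eq_poly_in_U (R := R) (2 * m - 1))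
  simp only [sub_add_cancel, eval_mul, eval_add, eval_intCast, eval_one, T_eval_two_mul_zero,
    Int.cast_negOnePow_natCast, eval_sub, eval_X, zero_mul, eval_pow, ne_eq,
    OfNat.ofNat_ne_zero, not_false_eq_true, zero_pow, sub_zero, one_mul, zero_sub] at h
  push_cast at h
  linear_combination h

theorem iterate_derivative_U_two_mul_sub_one_eval_zero_odd (m t : ℕ) :
    (derivative^[2 * t + 1] (U R (2 * m - 1))).eval 0 =
      -(2 * m * (-1) ^ m) * ∏ j ∈ range t, ((2 * (j + 1) : R) ^ 2 - (2 * m) ^ 2) := by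
  rw [apply_two_mul_add_eq_prod_mul (d := fun k => (derivative^[k] (U R (2 * m - 1))).eval 0)
    (iterate_derivative_U_eval_zero_recurrence (2 * m - 1)) 1 t, mul_comm]
  simp only [Function.iterate_one, derivative_U_two_mul_sub_one_eval_zero]
  congr 1
  refine prod_congr rfl fun j _ => ?_
  push_cast; ring

end Chebyshev

section MidpointCoeff

variable {K : Type*} [Field K]

/-- The polynomial `γ_k`: the coefficient of `z ^ k` in the stability polynomial of `2m` explicit
midpoint steps is `γ_k(1/m²)`. -/
noncomputable def midpointCoeffPoly (k : ℕ) : K[X] :=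
  C (k ! : K)⁻¹ * ∏ j ∈ range ((k + 1) / 2), (1 - C ((j : K) ^ 2) * X)

theorem natDegree_midpointCoeffPoly_le (k : ℕ) :
    (midpointCoeffPoly k : K[X]).natDegree ≤ (k - 1) / 2 := by
  refine natDegree_C_mul_le _ _ |>.trans ?_
  obtain h | ⟨n, hn⟩ : (k + 1) / 2 = 0 ∨ ∃ n, (k + 1) / 2 = n + 1 :=
    Nat.eq_zero_or_eq_succ_pred _ |>.imp id fun h => ⟨_, h⟩
  · simp [h]
  · rw [hn, prod_range_succ']
    simp only [Nat.cast_zero, ne_eq, OfNat.ofNat_ne_zero, not_false_eq_true, zero_pow,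
      map_zero, zero_mul, sub_zero, mul_one]
    refine natDegree_prod_le _ _ |>.trans ?_
    refine (sum_le_card_nsmul _ _ 1 fun j _ => ?_).trans (by simp; omega)
    exact (natDegree_sub_le _ _).trans
      (max_le (by simp) ((natDegree_C_mul_le _ _).trans natDegree_X_le))

theorem eval_zero_midpointCoeffPoly (k : ℕ) :
    (midpointCoeffPoly k : K[X]).eval 0 = (k ! : K)⁻¹ := by
  simp [midpointCoeffPoly, eval_prod]

end MidpointCoeff

section Midpoint

open Complex

theorem prod_sq_sub_sq_mul_I_div_pow {m : ℕ} (hm : m ≠ 0) (f : ℕ → ℂ) (t : ℕ) :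
    (∏ j ∈ range t, ((2 * f j) ^ 2 - (2 * m) ^ 2)) * (I / (2 * m)) ^ (2 * t) =
      ∏ j ∈ range t, (1 - f j ^ 2 * ((m : ℂ) ^ 2)⁻¹) := by
  rw [pow_mul, show ((I / (2 * m)) ^ 2) ^ t = ∏ _j ∈ range t, (I / (2 * m)) ^ 2 by simp,
    ← prod_mul_distrib]
  refine prod_congr rfl fun j _ => ?_
  rw [div_pow, I_sq]
  field_simp [Nat.cast_ne_zero.2 hm]
  ring

theorem taylor_term_T_add_I_mul_U (m k : ℕ) (hm : m ≠ 0) (z : ℂ) :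
    (derivative^[k] (Chebyshev.T ℂ (2 * m))).eval 0 / k ! * (I * z / (2 * m)) ^ k +
        I * ((derivative^[k] (Chebyshev.U ℂ (2 * m - 1))).eval 0 / k ! *
          (I * z / (2 * m)) ^ k) =
      (-1) ^ m * ((midpointCoeffPoly k).eval ((m : ℂ) ^ 2)⁻¹ * z ^ k) := by
  rw [show I * z / (2 * m) = I / (2 * m) * z by ring, mul_pow]
  obtain ⟨t, rfl | rfl⟩ := Nat.even_or_odd' k
  · rw [iterate_derivative_T_two_mul_eval_zero_even,
      iterate_derivative_U_two_mul_sub_one_eval_zero_even, midpointCoeffPoly,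
      show (2 * t + 1) / 2 = t by omega]
    simp only [eval_mul, eval_C, eval_prod, eval_sub, eval_one, eval_X]
    rw [← prod_sq_sub_sq_mul_I_div_pow hm (fun j => (j : ℂ)) t]
    ring
  · rw [iterate_derivative_T_two_mul_eval_zero_odd,
      iterate_derivative_U_two_mul_sub_one_eval_zero_odd, midpointCoeffPoly,
      show (2 * t + 1 + 1) / 2 = t + 1 by omega, prod_range_succ']
    simp only [eval_mul, eval_C, eval_prod, eval_sub, eval_one, eval_X]
    push_cast
    rw [← prod_sq_sub_sq_mul_I_div_pow hm (fun j => (j : ℂ) + 1) t, pow_succ]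
    have hI : I * (I / (2 * m)) * (2 * m) = -1 := by
      field_simp [Nat.cast_ne_zero.2 hm]; exact I_sq
    linear_combination
      (-(-1) ^ m * (∏ j ∈ range t, ((2 * ((j : ℂ) + 1)) ^ 2 - (2 * m) ^ 2)) *
        (I / (2 * m)) ^ (2 * t) * z ^ (2 * t + 1) / (2 * t + 1)!) * hI

theorem T_add_I_mul_U_eq_sum_midpointCoeffPoly {m N : ℕ} (hm : m ≠ 0) (hN : 2 * m ≤ N)
    (z : ℂ) :
    (Chebyshev.T ℂ (2 * m)).eval (I * z / (2 * m)) +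
        I * (Chebyshev.U ℂ (2 * m - 1)).eval (I * z / (2 * m)) =
      (-1) ^ m * ∑ k ∈ range (N + 1), (midpointCoeffPoly k).eval ((m : ℂ) ^ 2)⁻¹ * z ^ k := by
  have hT : (Chebyshev.T ℂ (2 * m)).natDegree ≤ N := by rw [Chebyshev.natDegree_T]; omega
  have hU : (Chebyshev.U ℂ (2 * m - 1)).natDegree ≤ N := by rw [Chebyshev.natDegree_U]; omega
  rw [eval_eq_sum_range_iterate_derivative_eval_zero _ hT,
    eval_eq_sum_range_iterate_derivative_eval_zero _ hU, mul_sum, mul_sum, ← sum_add_distrib]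
  exact sum_congr rfl fun k _ => taylor_term_T_add_I_mul_U m k hm z

end Midpoint

section Extrapolation

variable {K : Type*} [Field K] [CharZero K]

def extrapolationWeight (r m : ℕ) : K :=
  2 * (-1) ^ (r + m) * (m : K) ^ (2 * r) / ((r - m)! * (r + m)!)

theorem factorial_mul_extrapolationWeight_mul_inv_sq_pow {r j m : ℕ} (hj : j < r) (hm : m ≠ 0)
    (hmr : m ≤ r) :
    (2 * r)! * (extrapolationWeight r m * ((m : K) ^ 2)⁻¹ ^ j) =
      ((-1 : ℤ) ^ (2 * r - (r - m)) * ((2 * r).choose (r - m) : ℤ)) •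
          (-(r : K) + (r - m) • 1) ^ (2 * (r - j)) +
        ((-1 : ℤ) ^ (2 * r - (r + m)) * ((2 * r).choose (r + m) : ℤ)) •
          (-(r : K) + (r + m) • 1) ^ (2 * (r - j)) := by
  have hpow : (m : K) ^ (2 * (r - j)) = m ^ (2 * r) * ((m : K) ^ 2)⁻¹ ^ j := by
    rw [inv_pow, ← pow_mul, eq_mul_inv_iff_mul_eq₀ (pow_ne_zero _ (Nat.cast_ne_zero.2 hm)),
      ← pow_add]
    congr 1; omega
  have hchoose (s : ℕ) (hs : s ≤ 2 * r) :
      (((2 * r).choose s : ℤ) : K) = (2 * r)! / (s ! * (2 * r - s)!) := by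
    rw [Int.cast_natCast, Nat.cast_choose K hs]
  have hsign (k : ℕ) : (-1 : K) ^ (k + 2 * m) = (-1) ^ k := by simp [pow_add, pow_mul]
  rw [zsmul_eq_mul, zsmul_eq_mul, Int.cast_mul, Int.cast_mul, hchoose _ (by omega),
    hchoose _ (by omega), show 2 * r - (r - m) = r - m + 2 * m by omega,
    show 2 * r - (r + m) = r - m by omega, nsmul_one, nsmul_one, Nat.cast_sub hmr,
    Nat.cast_add, show -(r : K) + (r - m) = -m by ring, show -(r : K) + (r + m) = m by ring,
    Even.neg_pow (even_two_mul _), hpow, extrapolationWeight,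
    show r + m = r - m + 2 * m by omega]
  push_cast
  rw [hsign]
  ring

theorem sum_extrapolationWeight_mul_inv_sq_pow {r j : ℕ} (hj : j < r) :
    ∑ m ∈ Icc 1 r, extrapolationWeight r m * ((m : K) ^ 2)⁻¹ ^ j = if j = 0 then 1 else 0 := by
  have hΔ : (fwdDiff 1)^[2 * r] (fun x : K => x ^ (2 * (r - j))) (-r) =
      if j = 0 then ((2 * r)! : K) else 0 := by
    split_ifs with h
    · rw [h, Nat.sub_zero, fwdDiff_iter_eq_factorial]; rfl
    · rw [fwdDiff_iter_pow_eq_zero_of_lt (by omega)]; rfl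
  rw [fwdDiff_iter_eq_sum_shift, sum_range_two_mul_add_one_eq_add_sum_Icc] at hΔ
  have hcenter : ((-1 : ℤ) ^ (2 * r - r) * ((2 * r).choose r : ℤ)) •
      (-(r : K) + r • 1) ^ (2 * (r - j)) = 0 := by
    simp [show r - j ≠ 0 by omega]
  rw [hcenter, zero_add, ← sum_congr rfl fun m hm =>
    factorial_mul_extrapolationWeight_mul_inv_sq_pow hj
      (by have := (mem_Icc.1 hm).1; omega) (mem_Icc.1 hm).2, ← mul_sum] at hΔ
  have hfact : ((2 * r)! : K) ≠ 0 := Nat.cast_ne_zero.2 (factorial_ne_zero _)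
  split_ifs at hΔ ⊢
  · exact mul_left_cancel₀ hfact (hΔ.trans (mul_one _).symm)
  · exact (mul_eq_zero.1 hΔ).resolve_left hfact

theorem sum_extrapolationWeight_mul_eval {r : ℕ} (q : K[X]) (hq : q.natDegree < r) :
    ∑ m ∈ Icc 1 r, extrapolationWeight r m * q.eval ((m : K) ^ 2)⁻¹ = q.eval 0 := by
  rw [← coeff_zero_eq_eval_zero]
  simp_rw [eval_eq_sum_range' hq, mul_sum]
  rw [sum_comm]
  simp_rw [mul_left_comm _ (q.coeff _), ← mul_sum]
  rw [sum_congr rfl fun j hj => by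
    rw [sum_extrapolationWeight_mul_inv_sq_pow (mem_range.1 hj)]]
  simp [Nat.pos_of_ne_zero (by omega : r ≠ 0)]

end Extrapolation

/-- **Section 4.2, second identity.** For every `r ≥ 1` and `z ∈ ℂ`,
`∑_{m=1}^{r} (2(−1)^r m^{2r}/((r−m)!(r+m)!)) (T_{2m}(iz/(2m)) + i·U_{2m−1}(iz/(2m)))
 = ∑_{m=0}^{2r} z^m/m!`,
where `T_ℓ`, `U_ℓ` are the Chebyshev polynomials of the first and second kind:
the stability polynomial of the order-`2r` explicit midpoint extrapolation method is
the degree-`2r` Taylor polynomial of the exponential. -/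
theorem midpoint_extrapolation_stability_identity (r : ℕ) (hr : 1 ≤ r) (z : ℂ) :
    ∑ m ∈ Finset.Icc 1 r,
        (2 * (-1 : ℂ) ^ r * (m : ℂ) ^ (2 * r) /
          ((Nat.factorial (r - m) : ℂ) * (Nat.factorial (r + m) : ℂ))) *
          ((Polynomial.Chebyshev.T ℂ (2 * (m : ℤ))).eval (Complex.I * z / (2 * m)) +
            Complex.I *
              (Polynomial.Chebyshev.U ℂ (2 * (m : ℤ) - 1)).eval (Complex.I * z / (2 * m))) =
      ∑ m ∈ Finset.range (2 * r + 1), z ^ m / (Nat.factorial m : ℂ) := by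
  have hweighted : ∀ m ∈ Icc 1 r,
      (2 * (-1 : ℂ) ^ r * (m : ℂ) ^ (2 * r) / ((r - m)! * (r + m)!)) *
          ((Chebyshev.T ℂ (2 * m)).eval (Complex.I * z / (2 * m)) +
            Complex.I * (Chebyshev.U ℂ (2 * m - 1)).eval (Complex.I * z / (2 * m))) =
        ∑ k ∈ range (2 * r + 1),
          extrapolationWeight r m * (midpointCoeffPoly k).eval ((m : ℂ) ^ 2)⁻¹ * z ^ k := by
    intro m hm
    obtain ⟨hm1, hmr⟩ := mem_Icc.1 hm
    rw [T_add_I_mul_U_eq_sum_midpointCoeffPoly (N := 2 * r) (by omega) (by omega), ← mul_assoc,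
      mul_sum]
    refine sum_congr rfl fun k _ => ?_
    rw [extrapolationWeight, pow_add]
    ring
  rw [sum_congr rfl hweighted, sum_comm]
  refine sum_congr rfl fun k hk => ?_
  rw [← sum_mul, sum_extrapolationWeight_mul_eval _
    ((natDegree_midpointCoeffPoly_le k).trans_lt (by have := mem_range.1 hk; omega)),
    eval_zero_midpointCoeffPoly, div_eq_inv_mul, mul_comm]
end

section
/- Let p ≥ 3 be an integer. Then for all integers m, ℓ with 1 ≤ m ≤ p and 1 ≤ ℓ ≤ m, and for every z ∈ ℂ satisfying |∑_{k=0}^{p} z^k/k!| ≤ 1, one has (m^{p−1} / ((p−m)! · (m−1)!)) · |1 + z/m|^{ℓ−1} < 9.34^p / (5.2·π·√(p−1)). -/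
/-!
Write `T_n` for the degree `n` Taylor polynomial of `exp`. The identity
`(n - z) T_n(z) = ∑_{k ≤ n} (n - k) z^k / k! - z^{n+1} / n!` shows that the top term dominates when
`|z| > 6n/5` and `n ≥ 3`, because `2^{n-1} n! ≤ n^n`; so `S_p` lies in the disc `|z| ≤ 6p/5`.
There `m |1 + z/m| ≤ m + 6p/5 ≤ 11p/5`, which bounds the amplification factor by
`C(p-1, m-1) (11/5)^{m-1} p^{p-1} / (p-1)!`. For `p ≤ 9` this is checked numerically. For larger `p`
the binomial theorem bounds it by `(16/5)^{p-1} p^{p-1} / (p-1)!`; after multiplication by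
`√(p - 1)` this grows by a factor at most `(16e/5) √(p/(p-1)) < 9.34` from `p` to `p + 1`.
-/

open Finset Real
open scoped Nat

def expTaylor {K : Type*} [Field K] (n : ℕ) (z : K) : K :=
  ∑ k ∈ range (n + 1), z ^ k / k !

theorem sub_mul_expTaylor {K : Type*} [Field K] [CharZero K] (n : ℕ) (z : K) :
    ((n : K) - z) * expTaylor n z =
      ∑ k ∈ range (n + 1), ((n : K) - k) * z ^ k / (k ! : K) - z ^ (n + 1) / (n ! : K) := by
  induction n with
  | zero => simp [expTaylor]
  | succ n ih =>
    have hsum : ∑ k ∈ range (n + 1 + 1), (((n + 1 : ℕ) : K) - k) * z ^ k / (k ! : K) =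
        ∑ k ∈ range (n + 1), ((n : K) - k) * z ^ k / (k ! : K) + expTaylor n z := by
      rw [sum_range_succ, expTaylor, ← sum_add_distrib]
      push_cast
      simp only [sub_self, zero_mul, zero_div, add_zero]
      exact sum_congr rfl fun k _ => by ring
    rw [hsum, expTaylor, sum_range_succ, ← expTaylor, mul_add, Nat.cast_succ, add_sub_right_comm,
      add_mul, ih, Nat.factorial_succ]
    push_cast
    field_simp
    ring

theorem two_pow_mul_factorial_le_pow (n : ℕ) : 2 ^ n * (n + 1)! ≤ (n + 1) ^ (n + 1) := by
  induction n with
  | zero => simp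
  | succ n ih =>
    have bernoulli : 2 * (n + 1) ^ (n + 1) ≤ (n + 1 + 1) ^ (n + 1) := by
      have := pow_add_mul_le_add_pow (a := n + 1) (b := 1) (by omega) (by omega) (n + 1)
      rwa [Nat.add_sub_cancel, Nat.cast_id, mul_one, ← pow_succ', ← two_mul] at this
    calc 2 ^ (n + 1) * (n + 1 + 1)! = (n + 1 + 1) * (2 * (2 ^ n * (n + 1)!)) := by
          rw [Nat.factorial_succ (n + 1)]; ring
      _ ≤ (n + 1 + 1) * (2 * (n + 1) ^ (n + 1)) := by gcongr
      _ ≤ (n + 1 + 1) * (n + 1 + 1) ^ (n + 1) := by gcongr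
      _ = (n + 1 + 1) ^ (n + 1 + 1) := by ring

theorem sum_sub_mul_pow_div_factorial_self (n : ℕ) :
    ∑ k ∈ range (n + 1), ((n : ℝ) - k) * (n : ℝ) ^ k / (k ! : ℝ) =
      (n : ℝ) ^ (n + 1) / (n ! : ℝ) := by
  have := sub_mul_expTaylor (K := ℝ) n n
  rw [sub_self, zero_mul] at this
  linarith

theorem norm_sum_sub_mul_pow_div_factorial_le {n : ℕ} (hn : 0 < n) {z : ℂ} (hnz : n ≤ ‖z‖) :
    ‖∑ k ∈ range (n + 1), ((n : ℂ) - k) * z ^ k / (k ! : ℂ)‖ ≤ ‖z‖ ^ (n - 1) * n ^ 2 / n ! := by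
  set r := ‖z‖
  have hn0 : (0 : ℝ) < n := by exact_mod_cast hn
  have hrn : 1 ≤ r / n := (one_le_div hn0).mpr hnz
  have hterm : ∀ k ∈ range (n + 1), ((n : ℝ) - k) * r ^ k / (k ! : ℝ) ≤
      (r / n) ^ (n - 1) * (((n : ℝ) - k) * (n : ℝ) ^ k / (k ! : ℝ)) := by
    intro k hk
    rcases (Nat.lt_succ_iff.mp (mem_range.mp hk)).eq_or_lt with rfl | hkn
    · simp
    have hnk : (0 : ℝ) ≤ n - k := by
      rw [sub_nonneg]; exact_mod_cast hkn.le
    calc ((n : ℝ) - k) * r ^ k / (k ! : ℝ) = ((n : ℝ) - k) / k ! * ((r / n) ^ k * n ^ k) := by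
          rw [← mul_pow, div_mul_cancel₀ _ hn0.ne']; ring
      _ ≤ ((n : ℝ) - k) / k ! * ((r / n) ^ (n - 1) * n ^ k) := by
          gcongr
          omega
      _ = (r / n) ^ (n - 1) * (((n : ℝ) - k) * (n : ℝ) ^ k / (k ! : ℝ)) := by ring
  calc _ ≤ ∑ k ∈ range (n + 1), ((n : ℝ) - k) * r ^ k / (k ! : ℝ) := by
        refine (norm_sum_le _ _).trans_eq (sum_congr rfl fun k hk => ?_)
        have hkn : k ≤ n := Nat.lt_succ_iff.mp (mem_range.mp hk)
        rw [← Nat.cast_sub hkn, ← Nat.cast_sub hkn]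
        simp [r]
    _ ≤ ∑ k ∈ range (n + 1), (r / n) ^ (n - 1) * (((n : ℝ) - k) * (n : ℝ) ^ k / (k ! : ℝ)) :=
        sum_le_sum hterm
    _ = r ^ (n - 1) * n ^ 2 / n ! := by
        rw [← mul_sum, sum_sub_mul_pow_div_factorial_self, div_pow,
          show n + 1 = n - 1 + 2 by omega, pow_add]
        field_simp

theorem norm_pow_mul_sub_le_factorial {n : ℕ} (hn : 0 < n) {z : ℂ}
    (hz : ‖expTaylor n z‖ ≤ 1) (hnz : n ≤ ‖z‖) : ‖z‖ ^ (n - 1) * (‖z‖ - n) ≤ n ! := by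
  set r := ‖z‖
  have hT : ‖((n : ℂ) - z) * expTaylor n z‖ ≤ n + r := by
    rw [norm_mul]
    refine mul_le_of_le_one_right (by positivity) hz |>.trans ?_
    simpa [r] using norm_sub_le (n : ℂ) z
  have hzpow : r ^ (n + 1) / n ! ≤ r ^ (n - 1) * n ^ 2 / n ! + (n + r) := by
    calc r ^ (n + 1) / n ! = ‖z ^ (n + 1) / (n ! : ℂ)‖ := by simp [r]
      _ = ‖∑ k ∈ range (n + 1), ((n : ℂ) - k) * z ^ k / (k ! : ℂ) -
            ((n : ℂ) - z) * expTaylor n z‖ := by rw [sub_mul_expTaylor, sub_sub_cancel]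
      _ ≤ _ := (norm_sub_le _ _).trans
            (add_le_add (norm_sum_sub_mul_pow_div_factorial_le hn hnz) hT)
  have hfac : (0 : ℝ) < n ! := by positivity
  rw [show n + 1 = n - 1 + 2 by omega, pow_add, div_add' _ _ _ hfac.ne',
    div_le_div_iff_of_pos_right hfac] at hzpow
  have hpos : 0 < r + n := by
    have : (0 : ℝ) < n := by exact_mod_cast hn
    linarith
  refine le_of_mul_le_mul_right ?_ hpos
  linear_combination hzpow

theorem norm_le_of_norm_expTaylor_le_one {n : ℕ} (hn : 3 ≤ n) {z : ℂ}
    (hz : ‖expTaylor n z‖ ≤ 1) : ‖z‖ ≤ 6 * n / 5 := by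
  by_contra! hr
  have key := norm_pow_mul_sub_le_factorial (by omega) hz (by linarith)
  have hfac : (2 : ℝ) ^ (n - 1) * n ! ≤ n ^ n := by
    obtain ⟨k, rfl⟩ : ∃ k, n = k + 1 := ⟨n - 1, by omega⟩
    exact_mod_cast two_pow_mul_factorial_le_pow k
  have hpow : (12 / 5 : ℝ) ^ 2 ≤ (12 / 5) ^ (n - 1) := pow_le_pow_right₀ (by norm_num) (by omega)
  have : (n ! : ℝ) < n ! := calc
    (n ! : ℝ) < (12 / 5) ^ (n - 1) * n ! / 5 := by nlinarith [(by positivity : (0 : ℝ) < n !)]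
    _ = (6 / 5) ^ (n - 1) * (2 ^ (n - 1) * n !) / 5 := by
        rw [← mul_assoc, ← mul_pow]; norm_num
    _ ≤ (6 / 5) ^ (n - 1) * n ^ n / 5 := by gcongr
    _ = (6 * n / 5) ^ (n - 1) * (n / 5) := by
        rw [← pow_sub_one_mul (by omega : n ≠ 0)]; ring
    _ < ‖z‖ ^ (n - 1) * (‖z‖ - n) :=
        mul_lt_mul' (pow_le_pow_left₀ (by positivity) hr.le _) (by linarith) (by positivity)
          (pow_pos (by linarith) _)
    _ ≤ n ! := key
  exact this.false

theorem pow_mul_norm_one_add_div_pow_le {m p ℓ : ℕ} (hm : 0 < m) (hmp : m ≤ p) (hℓm : ℓ ≤ m)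
    (z : ℂ) : (m : ℝ) ^ (p - 1) * ‖1 + z / m‖ ^ (ℓ - 1) ≤ p ^ (p - m) * (m + ‖z‖) ^ (m - 1) := by
  have hm0 : (0 : ℝ) < m := by exact_mod_cast hm
  have hnorm : ‖1 + z / m‖ ≤ 1 + ‖z‖ / m := by simpa using norm_add_le 1 (z / m)
  calc (m : ℝ) ^ (p - 1) * ‖1 + z / m‖ ^ (ℓ - 1)
      ≤ m ^ (p - m) * m ^ (m - 1) * (1 + ‖z‖ / m) ^ (m - 1) := by
        rw [← pow_add, show p - m + (m - 1) = p - 1 by omega]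
        gcongr
        exact (pow_le_pow_left₀ (norm_nonneg _) hnorm _).trans
          (pow_le_pow_right₀ (le_add_of_nonneg_right (by positivity)) (by omega))
    _ = m ^ (p - m) * (m + ‖z‖) ^ (m - 1) := by
        rw [mul_assoc, ← mul_pow, mul_one_add, mul_div_cancel₀ _ hm0.ne']
    _ ≤ p ^ (p - m) * (m + ‖z‖) ^ (m - 1) := by gcongr

theorem internal_amplification_le {m p ℓ : ℕ} (hm : 0 < m) (hmp : m ≤ p) (hℓm : ℓ ≤ m) {z : ℂ}
    (hz : ‖z‖ ≤ 6 * p / 5) :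
    (m : ℝ) ^ (p - 1) / ((p - m)! * (m - 1)!) * ‖1 + z / m‖ ^ (ℓ - 1) ≤
      (p - 1).choose (m - 1) * (11 / 5) ^ (m - 1) * p ^ (p - 1) / (p - 1)! := by
  have hchoose : ((p - 1).choose (m - 1) : ℝ) = (p - 1)! / ((m - 1)! * (p - m)!) := by
    rw [Nat.cast_choose ℝ (by omega : m - 1 ≤ p - 1), show p - 1 - (m - 1) = p - m by omega]
  have hmz : (m : ℝ) + ‖z‖ ≤ 11 / 5 * p := by
    have : (m : ℝ) ≤ p := by exact_mod_cast hmp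
    linarith
  calc (m : ℝ) ^ (p - 1) / ((p - m)! * (m - 1)!) * ‖1 + z / m‖ ^ (ℓ - 1)
      = (m : ℝ) ^ (p - 1) * ‖1 + z / m‖ ^ (ℓ - 1) / ((p - m)! * (m - 1)!) := by ring
    _ ≤ p ^ (p - m) * (11 / 5 * p) ^ (m - 1) / ((p - m)! * (m - 1)!) := by
        refine div_le_div_of_nonneg_right
          ((pow_mul_norm_one_add_div_pow_le hm hmp hℓm z).trans ?_) (by positivity)
        gcongr
    _ = (p - 1).choose (m - 1) * (11 / 5) ^ (m - 1) * p ^ (p - 1) / (p - 1)! := by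
        rw [hchoose, mul_pow, ← show p - m + (m - 1) = p - 1 by omega, pow_add]
        field_simp

theorem choose_mul_pow_le_add_one_pow {R : Type*} [CommSemiring R] [PartialOrder R]
    [IsOrderedRing R] {a : R} (ha : 0 ≤ a) (n k : ℕ) : n.choose k * a ^ k ≤ (a + 1) ^ n := by
  rcases le_or_gt k n with hk | hk
  · rw [add_pow]
    convert single_le_sum (f := fun i => a ^ i * 1 ^ (n - i) * n.choose i)
      (fun i _ => mul_nonneg (mul_nonneg (pow_nonneg ha i) (pow_nonneg zero_le_one _))
        (Nat.cast_nonneg _)) (mem_range.mpr (Nat.lt_succ_of_le hk)) using 1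
    simp only [one_pow, mul_one, mul_comm]
  · simpa [Nat.choose_eq_zero_of_lt hk] using pow_nonneg (add_nonneg ha zero_le_one) n

theorem add_two_pow_succ_div_factorial_succ_le (n : ℕ) :
    ((n : ℝ) + 2) ^ (n + 1) / (n + 1)! ≤ exp 1 * (((n : ℝ) + 1) ^ n / n !) := by
  have hexp : (1 + 1 / ((n : ℝ) + 1)) ^ (n + 1) ≤ exp 1 := by
    calc (1 + 1 / ((n : ℝ) + 1)) ^ (n + 1) ≤ exp (1 / ((n : ℝ) + 1)) ^ (n + 1) := by
          gcongr
          linarith [add_one_le_exp (1 / ((n : ℝ) + 1))]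
      _ = exp 1 := by
          rw [← exp_nat_mul]; push_cast; field_simp
  calc ((n : ℝ) + 2) ^ (n + 1) / (n + 1)!
      = (1 + 1 / ((n : ℝ) + 1)) ^ (n + 1) * (((n : ℝ) + 1) ^ n / n !) := by
        rw [show 1 + 1 / ((n : ℝ) + 1) = (n + 2) / (n + 1) by field_simp; ring, div_pow,
          Nat.factorial_succ, pow_succ ((n : ℝ) + 1)]
        push_cast
        field_simp
    _ ≤ exp 1 * (((n : ℝ) + 1) ^ n / n !) := by gcongr

theorem sixteen_fifths_mul_exp_one_mul_sqrt_le {n : ℕ} (hn : 7 ≤ n) :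
    16 / 5 * exp 1 * √((n : ℝ) + 1) ≤ 9.34 * √n := by
  have hn' : (7 : ℝ) ≤ n := by exact_mod_cast hn
  have hsq : (16 / 5 * exp 1) ^ 2 * ((n : ℝ) + 1) ≤ 9.34 ^ 2 * n := by
    have he : (16 / 5 * exp 1) ^ 2 ≤ 75.67 := by nlinarith [exp_one_lt_d9, exp_pos 1]
    nlinarith
  calc 16 / 5 * exp 1 * √((n : ℝ) + 1) = √((16 / 5 * exp 1) ^ 2 * ((n : ℝ) + 1)) := by
        rw [sqrt_mul (by positivity), sqrt_sq (by positivity)]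
    _ ≤ √(9.34 ^ 2 * n) := sqrt_le_sqrt hsq
    _ = 9.34 * √n := by rw [sqrt_mul (by positivity), sqrt_sq (by norm_num)]

theorem sixteen_fifths_pow_mul_mul_sqrt_lt {n : ℕ} (hn : 9 ≤ n) :
    (16 / 5 : ℝ) ^ n * (((n : ℝ) + 1) ^ n / n !) * (5.2 * π * √n) < 9.34 ^ (n + 1) := by
  induction n, hn using Nat.le_induction with
  | base =>
    have hsqrt : √(9 : ℝ) = 3 := by
      rw [show (9 : ℝ) = 3 ^ 2 by norm_num, sqrt_sq (by norm_num)]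
    push_cast
    rw [hsqrt]
    calc (16 / 5 : ℝ) ^ 9 * ((9 + 1) ^ 9 / 9 !) * (5.2 * π * 3)
        < (16 / 5 : ℝ) ^ 9 * ((9 + 1) ^ 9 / 9 !) * (5.2 * 3.15 * 3) := by
          gcongr; exact pi_lt_d2
      _ < 9.34 ^ (9 + 1) := by norm_num [Nat.factorial]
  | succ n hn ih =>
    calc (16 / 5 : ℝ) ^ (n + 1) * ((((n + 1 : ℕ) : ℝ) + 1) ^ (n + 1) / (n + 1)!) *
          (5.2 * π * √((n + 1 : ℕ) : ℝ))
        = (16 / 5 : ℝ) ^ n * (5.2 * π) * (((n : ℝ) + 2) ^ (n + 1) / (n + 1)!) *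
            (16 / 5 * √((n : ℝ) + 1)) := by push_cast; ring
      _ ≤ (16 / 5 : ℝ) ^ n * (5.2 * π) * (exp 1 * (((n : ℝ) + 1) ^ n / n !)) *
            (16 / 5 * √((n : ℝ) + 1)) := by
          gcongr; exact add_two_pow_succ_div_factorial_succ_le n
      _ = (16 / 5 : ℝ) ^ n * (5.2 * π) * (((n : ℝ) + 1) ^ n / n !) *
            (16 / 5 * exp 1 * √((n : ℝ) + 1)) := by ring
      _ ≤ (16 / 5 : ℝ) ^ n * (5.2 * π) * (((n : ℝ) + 1) ^ n / n !) * (9.34 * √n) :=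
          mul_le_mul_of_nonneg_left (sixteen_fifths_mul_exp_one_mul_sqrt_le (by omega))
            (by positivity)
      _ = 9.34 * ((16 / 5 : ℝ) ^ n * (((n : ℝ) + 1) ^ n / n !) * (5.2 * π * √n)) := by ring
      _ < 9.34 * 9.34 ^ (n + 1) := by gcongr
      _ = 9.34 ^ (n + 1 + 1) := by ring

theorem pi_mul_sqrt_sub_one_le (p : ℕ) : π * √((p : ℝ) - 1) ≤ 3.15 * (p / 2) := by
  have hsqrt : √((p : ℝ) - 1) ≤ p / 2 :=
    sqrt_le_iff.mpr ⟨by positivity, by nlinarith [sq_nonneg ((p : ℝ) / 2 - 1)]⟩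
  exact mul_le_mul pi_lt_d2.le hsqrt (sqrt_nonneg _) (by norm_num)

theorem choose_mul_pow_mul_sqrt_lt_of_le_nine {m p : ℕ} (hm : 0 < m) (hmp : m ≤ p)
    (hp : p ≤ 9) :
    (p - 1).choose (m - 1) * (11 / 5 : ℝ) ^ (m - 1) * p ^ (p - 1) / (p - 1)! *
      (5.2 * π * √((p : ℝ) - 1)) < 9.34 ^ p := by
  rw [mul_assoc 5.2]
  refine (mul_le_mul_of_nonneg_left (mul_le_mul_of_nonneg_left (pi_mul_sqrt_sub_one_le p)
    (by norm_num)) (by positivity)).trans_lt ?_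
  interval_cases p <;> interval_cases m <;> norm_num [Nat.choose, Nat.factorial]

theorem choose_mul_pow_mul_sqrt_lt {m p : ℕ} (hm : 0 < m) (hmp : m ≤ p) :
    (p - 1).choose (m - 1) * (11 / 5 : ℝ) ^ (m - 1) * p ^ (p - 1) / (p - 1)! *
      (5.2 * π * √((p : ℝ) - 1)) < 9.34 ^ p := by
  rcases le_or_gt p 9 with hp | hp
  · exact choose_mul_pow_mul_sqrt_lt_of_le_nine hm hmp hp
  obtain ⟨n, rfl⟩ : ∃ n, p = n + 1 := ⟨p - 1, by omega⟩
  calc ((n + 1 - 1).choose (m - 1) * (11 / 5 : ℝ) ^ (m - 1)) * ((n + 1 : ℕ) : ℝ) ^ (n + 1 - 1) /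
        (n + 1 - 1)! * (5.2 * π * √(((n + 1 : ℕ) : ℝ) - 1))
      = (n.choose (m - 1) * (11 / 5 : ℝ) ^ (m - 1)) * (((n : ℝ) + 1) ^ n / n !) *
          (5.2 * π * √n) := by push_cast; simp only [add_sub_cancel_right]; ring
    _ ≤ (16 / 5 : ℝ) ^ n * (((n : ℝ) + 1) ^ n / n !) * (5.2 * π * √n) := by
        gcongr
        convert choose_mul_pow_le_add_one_pow (by norm_num : (0 : ℝ) ≤ 11 / 5) n (m - 1) using 2
        norm_num
    _ < 9.34 ^ (n + 1) := sixteen_fifths_pow_mul_mul_sqrt_lt (by omega)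

theorem euler_extrapolation_amplification_bound_general
    (p : ℕ) (hp : 3 ≤ p) (m ℓ : ℕ) (hm1 : 1 ≤ m) (hmp : m ≤ p)
    (hℓm : ℓ ≤ m) (z : ℂ)
    (hz : ‖∑ k ∈ Finset.range (p + 1), z ^ k / (Nat.factorial k : ℂ)‖ ≤ 1) :
    (m : ℝ) ^ (p - 1) / ((Nat.factorial (p - m) : ℝ) * (Nat.factorial (m - 1) : ℝ)) *
        ‖1 + z / m‖ ^ (ℓ - 1) <
      9.34 ^ p / (5.2 * Real.pi * Real.sqrt ((p : ℝ) - 1)) := by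
  have hnorm : ‖z‖ ≤ 6 * p / 5 := norm_le_of_norm_expTaylor_le_one hp hz
  have hsqrt : 0 < √((p : ℝ) - 1) := sqrt_pos.mpr (by
    have : (3 : ℝ) ≤ p := by exact_mod_cast hp
    linarith)
  rw [lt_div_iff₀ (by positivity)]
  exact (mul_le_mul_of_nonneg_right (internal_amplification_le hm1 hmp hℓm hnorm)
    (by positivity)).trans_lt (choose_mul_pow_mul_sqrt_lt hm1 hmp)

/-- **Theorem 4.10.** For `p ≥ 3`, the internal stability polynomials of the
order-`p` explicit Euler extrapolation method satisfy, on the absolute stability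
region `S_p = {z : |∑_{k=0}^p z^k/k!| ≤ 1}`,
`|Q^{EE}_{p,m,ℓ}(z)| = (m^{p−1}/((p−m)!(m−1)!))·|1 + z/m|^{ℓ−1} < 9.34^p/(5.2·π·√(p−1))`. -/
theorem euler_extrapolation_amplification_bound
    (p : ℕ) (hp : 3 ≤ p) (m ℓ : ℕ) (hm1 : 1 ≤ m) (hmp : m ≤ p)
    (hℓ1 : 1 ≤ ℓ) (hℓm : ℓ ≤ m) (z : ℂ)
    (hz : ‖∑ k ∈ Finset.range (p + 1), z ^ k / (Nat.factorial k : ℂ)‖ ≤ 1) :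
    (m : ℝ) ^ (p - 1) / ((Nat.factorial (p - m) : ℝ) * (Nat.factorial (m - 1) : ℝ)) *
        ‖1 + z / m‖ ^ (ℓ - 1) <
      9.34 ^ p / (5.2 * Real.pi * Real.sqrt ((p : ℝ) - 1)) :=
  euler_extrapolation_amplification_bound_general p hp m ℓ hm1 hmp hℓm z hz
end

section
/- Let p ≥ 3 be an integer. Then for all integers m, ℓ with 1 ≤ m ≤ p and 1 ≤ ℓ ≤ m, and for every z ∈ ℂ with Re(z) ≤ 0 satisfying |∑_{k=0}^{p} z^k/k!| ≤ 1, one has (m^{p−1} / ((p−m)! · (m−1)!)) · |1 + z/m|^{ℓ−1} < 7.01^p / (3.9·π·√(p−1)). -/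
/-!
Multiplying `E_p(z) = ∑_{k ≤ p} z^k/k!` by `z - p` telescopes to
`z^{p+1}/p! = (z - p) E_p(z) + ∑_{k ≤ p} (p - k) z^k/k!`, so where `|E_p(z)| ≤ 1` the top power
`|z|^{p+1}/p!` is dominated by a polynomial of lower degree in `|z|`; comparing both at `6p/5`
confines the stability region to the disc `|z| ≤ 6p/5`. In the closed left half-plane
`|1 + z/m| ≤ √(m² + |z|²)/m`, a bound that is at least `1`, so the exponent `ℓ - 1` may be raised to
`m - 1` and the claim becomes an explicit inequality in `p` and `m`. For `p ≤ 30` it is a finite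
computation. For larger `p` the two quotients `m^{p-m}/(p-m)!` and
`√(m² + R²)^{m-1}/(m-1)!` are bounded by `x^n/n! ≤ e^{tx}/t^n` with weights `t = 1/3` and
`t = e^{1/3}/3`, chosen so that the product `3^{p-1} e^{1/3} e^{e^{1/3} √(m² + R²)/3}` depends on
`m` only through `√(m² + R²) ≤ 1.5621 p`; this gives `3^{p-1} e^{1/3} 2.07^p`, and the slack in
`7.01 = 3 · 2.07 · 701/621` absorbs the factor `√(p - 1)`.
-/

open Finset Nat

theorem sub_mul_sum_pow_div_factorial_add_sum {K : Type*} [Field K] [CharZero K] (p : ℕ)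
    (z : K) :
    (z - p) * ∑ k ∈ range (p + 1), z ^ k / (k ! : K)
      + ∑ k ∈ range (p + 1), ((p : K) - k) * z ^ k / (k ! : K) = z ^ (p + 1) / (p ! : K) := by
  have hshift : z * ∑ k ∈ range (p + 1), z ^ k / (k ! : K)
      = ∑ k ∈ range (p + 2), (k : K) * z ^ k / (k ! : K) := by
    rw [sum_range_succ' _ (p + 1), mul_sum]
    simp only [CharP.cast_eq_zero, zero_mul, zero_div, add_zero]
    refine sum_congr rfl fun k _ => ?_
    rw [factorial_succ]
    push_cast
    field_simp
    ring
  have hlast : ((p + 1 : ℕ) : K) * z ^ (p + 1) / ((p + 1)! : K) = z ^ (p + 1) / (p ! : K) := by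
    rw [factorial_succ]
    push_cast
    field_simp
  rw [sum_range_succ _ (p + 1), hlast] at hshift
  have hsplit : ∑ k ∈ range (p + 1), ((p : K) - k) * z ^ k / (k ! : K)
      = p * ∑ k ∈ range (p + 1), z ^ k / (k ! : K)
        - ∑ k ∈ range (p + 1), (k : K) * z ^ k / (k ! : K) := by
    rw [mul_sum, ← sum_sub_distrib]
    exact sum_congr rfl fun k _ => by ring
  rw [hsplit]
  linear_combination hshift

noncomputable def stabilityMajorant (p : ℕ) (r : ℝ) : ℝ :=
  r + p + ∑ k ∈ range (p + 1), ((p : ℝ) - k) * r ^ k / (k ! : ℝ)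

theorem norm_pow_succ_div_factorial_le_stabilityMajorant {p : ℕ} {z : ℂ}
    (hz : ‖∑ k ∈ range (p + 1), z ^ k / (k ! : ℂ)‖ ≤ 1) :
    ‖z‖ ^ (p + 1) / (p ! : ℝ) ≤ stabilityMajorant p ‖z‖ := by
  have hterm : ∀ k ∈ range (p + 1),
      ‖((p : ℂ) - k) * z ^ k / (k ! : ℂ)‖ = ((p : ℝ) - k) * ‖z‖ ^ k / (k ! : ℝ) := by
    intro k hk
    have hkp : (k : ℝ) ≤ p := by exact_mod_cast Nat.lt_succ_iff.mp (mem_range.mp hk)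
    rw [norm_div, norm_mul, norm_pow, Complex.norm_natCast, ← Complex.ofReal_natCast,
      ← Complex.ofReal_natCast, ← Complex.ofReal_sub, Complex.norm_real,
      Real.norm_of_nonneg (by linarith)]
  calc ‖z‖ ^ (p + 1) / (p ! : ℝ) = ‖z ^ (p + 1) / (p ! : ℂ)‖ := by
        rw [norm_div, norm_pow, Complex.norm_natCast]
    _ = ‖(z - p) * ∑ k ∈ range (p + 1), z ^ k / (k ! : ℂ)
          + ∑ k ∈ range (p + 1), ((p : ℂ) - k) * z ^ k / (k ! : ℂ)‖ := by
      rw [sub_mul_sum_pow_div_factorial_add_sum]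
    _ ≤ ‖z - p‖ * ‖∑ k ∈ range (p + 1), z ^ k / (k ! : ℂ)‖
          + ∑ k ∈ range (p + 1), ‖((p : ℂ) - k) * z ^ k / (k ! : ℂ)‖ :=
      norm_add_le_of_le (norm_mul_le _ _) (norm_sum_le _ _)
    _ ≤ (‖z‖ + p) * 1 + ∑ k ∈ range (p + 1), ((p : ℝ) - k) * ‖z‖ ^ k / (k ! : ℝ) := by
      rw [sum_congr rfl hterm]
      gcongr
      exact (norm_sub_le _ _).trans_eq (by rw [Complex.norm_natCast])
    _ = stabilityMajorant p ‖z‖ := by rw [stabilityMajorant]; ring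

theorem stabilityMajorant_mul_le (p : ℕ) {R u : ℝ} (hR : 0 ≤ R) (hu : 1 ≤ u) :
    stabilityMajorant p (R * u) ≤ u ^ (p + 1) * stabilityMajorant p R := by
  have hpow : ∀ k ≤ p + 1, u ^ k ≤ u ^ (p + 1) := fun k hk => pow_le_pow_right₀ hu hk
  have hkp : ∀ k ∈ range (p + 1), (k : ℝ) ≤ p := fun k hk => by
    exact_mod_cast Nat.lt_succ_iff.mp (mem_range.mp hk)
  simp only [stabilityMajorant, mul_add, mul_sum]
  refine add_le_add (add_le_add ?_ ?_) (sum_le_sum fun k hk => ?_)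
  · rw [mul_comm (u ^ (p + 1))]
    exact mul_le_mul_of_nonneg_left (by simpa using hpow 1 (by omega)) hR
  · exact le_mul_of_one_le_left (by positivity) (one_le_pow₀ hu)
  · have := mul_le_mul_of_nonneg_left (hpow k (by simp at hk; omega))
      (by have := hkp k hk; positivity : 0 ≤ ((p : ℝ) - k) * R ^ k / (k ! : ℝ))
    calc ((p : ℝ) - k) * (R * u) ^ k / (k ! : ℝ)
        = ((p : ℝ) - k) * R ^ k / (k ! : ℝ) * u ^ k := by ring
      _ ≤ _ := by linarith

theorem norm_le_of_stabilityMajorant_lt {p : ℕ} {z : ℂ}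
    (hz : ‖∑ k ∈ range (p + 1), z ^ k / (k ! : ℂ)‖ ≤ 1) {R : ℝ} (hR : 0 < R)
    (hlt : stabilityMajorant p R < R ^ (p + 1) / (p ! : ℝ)) : ‖z‖ ≤ R := by
  by_contra! hRz
  set u := ‖z‖ / R with hu_def
  have hu : 1 ≤ u := (one_le_div hR).mpr hRz.le
  have hzu : ‖z‖ = R * u := by rw [hu_def]; field_simp
  have h := norm_pow_succ_div_factorial_le_stabilityMajorant hz
  rw [hzu] at h
  refine lt_irrefl ((R * u) ^ (p + 1) / (p ! : ℝ)) ?_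
  calc (R * u) ^ (p + 1) / (p ! : ℝ) ≤ stabilityMajorant p (R * u) := h
    _ ≤ u ^ (p + 1) * stabilityMajorant p R := stabilityMajorant_mul_le p hR.le hu
    _ < u ^ (p + 1) * (R ^ (p + 1) / (p ! : ℝ)) := by gcongr
    _ = (R * u) ^ (p + 1) / (p ! : ℝ) := by ring

theorem factorial_le_factorial_mul_pow_sub {k n : ℕ} (hk : k ≤ n) :
    n ! ≤ k ! * n ^ (n - k) := by
  rw [← factorial_mul_descFactorial (Nat.sub_le n k), Nat.sub_sub_self hk]
  exact Nat.mul_le_mul_left _ (descFactorial_le_pow n (n - k))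

theorem pow_div_factorial_le_mul_div_pow {k n : ℕ} (hk : k ≤ n) {R : ℝ} (hR : 0 < R) :
    R ^ k / (k ! : ℝ) ≤ R ^ (n + 1) / (n ! : ℝ) * (n / R) ^ (n - k) / R := by
  have hfac : (n ! : ℝ) ≤ k ! * (n : ℝ) ^ (n - k) := by
    exact_mod_cast factorial_le_factorial_mul_pow_sub hk
  have hRn : R ^ (n + 1) = R ^ k * R ^ (n - k) * R := by
    rw [← pow_add, ← pow_succ, Nat.add_sub_cancel' hk]
  rw [div_pow, hRn, div_le_iff₀ (by positivity)]
  field_simp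
  linarith

theorem sum_range_mul_geometric_le {r : ℝ} (hr0 : 0 ≤ r) (hr1 : r < 1) (n : ℕ) :
    ∑ i ∈ range n, (i : ℝ) * r ^ i ≤ r / (1 - r) ^ 2 :=
  sum_le_hasSum _ (fun i _ => by positivity)
    (hasSum_coe_mul_geometric_of_norm_lt_one (by rwa [Real.norm_of_nonneg hr0]))

theorem sum_sub_mul_pow_div_factorial_le {p : ℕ} {R : ℝ} (hpR : (p : ℝ) < R) :
    ∑ k ∈ range (p + 1), ((p : ℝ) - k) * R ^ k / (k ! : ℝ)
      ≤ R ^ (p + 1) / (p ! : ℝ) / R * ((p / R) / (1 - p / R) ^ 2) := by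
  have hR : 0 < R := (Nat.cast_nonneg p).trans_lt hpR
  set F := R ^ (p + 1) / (p ! : ℝ)
  calc ∑ k ∈ range (p + 1), ((p : ℝ) - k) * R ^ k / (k ! : ℝ)
      ≤ ∑ k ∈ range (p + 1), F / R * (((p - k : ℕ) : ℝ) * (p / R) ^ (p - k)) := by
        refine sum_le_sum fun k hk => ?_
        have hkp : k ≤ p := Nat.lt_succ_iff.mp (mem_range.mp hk)
        rw [Nat.cast_sub hkp, mul_div_assoc]
        calc ((p : ℝ) - k) * (R ^ k / (k ! : ℝ)) ≤ ((p : ℝ) - k) * (F * (p / R) ^ (p - k) / R) :=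
              mul_le_mul_of_nonneg_left (pow_div_factorial_le_mul_div_pow hkp hR)
                (by linarith [(Nat.cast_le (α := ℝ)).mpr hkp])
          _ = _ := by ring
    _ = F / R * ∑ i ∈ range (p + 1), (i : ℝ) * (p / R) ^ i := by
        rw [← mul_sum, ← sum_range_reflect]
        refine congrArg _ (sum_congr rfl fun k hk => ?_)
        rw [Nat.add_sub_cancel, Nat.sub_sub_self (Nat.lt_succ_iff.mp (mem_range.mp hk))]
    _ ≤ F / R * ((p / R) / (1 - p / R) ^ 2) := by
        gcongr
        exact sum_range_mul_geometric_le (by positivity) ((div_lt_one hR).mpr hpR) _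

theorem stabilityMajorant_lt_of_31_le {p : ℕ} (hp : 31 ≤ p) :
    stabilityMajorant p (6 * p / 5) < (6 * p / 5) ^ (p + 1) / (p ! : ℝ) := by
  set R : ℝ := 6 * p / 5 with hR_def
  set F := R ^ (p + 1) / (p ! : ℝ)
  have hp31 : (31 : ℝ) ≤ p := by exact_mod_cast hp
  have hR : 0 < R := by positivity
  have hratio : (p : ℝ) / R = 5 / 6 := by rw [hR_def]; field_simp
  have hF : 0 < F := by positivity
  have hhead : R + p ≤ 11 / 6 * (5 / 6) ^ 31 * F := by
    have h0 := pow_div_factorial_le_mul_div_pow (Nat.zero_le p) hR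
    rw [hratio, pow_zero, factorial_zero, Nat.cast_one, div_one, Nat.sub_zero,
      le_div_iff₀ hR, one_mul] at h0
    have hpow : (5 / 6 : ℝ) ^ p ≤ (5 / 6) ^ 31 :=
      pow_le_pow_of_le_one (by norm_num) (by norm_num) hp
    have hpR : R + p = 11 / 6 * R := by rw [hR_def]; ring
    rw [hpR]
    nlinarith
  have hsum := sum_sub_mul_pow_div_factorial_le (p := p) (R := R) (by rw [hR_def]; linarith)
  rw [hratio] at hsum
  have h30 : 30 / R ≤ 25 / 31 := by
    rw [hR_def, div_le_iff₀ (by positivity)]; nlinarith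
  calc stabilityMajorant p R ≤ 11 / 6 * (5 / 6) ^ 31 * F + 30 / R * F := by
        rw [stabilityMajorant]
        linarith [show F / R * ((5 / 6) / (1 - 5 / 6) ^ 2) = 30 / R * F by ring]
    _ ≤ 11 / 6 * (5 / 6) ^ 31 * F + 25 / 31 * F := by gcongr
    _ < F := by nlinarith

theorem stabilityMajorant_six_fifths_lt {p : ℕ} (hp : 3 ≤ p) :
    stabilityMajorant p (6 * p / 5) < (6 * p / 5) ^ (p + 1) / (p ! : ℝ) := by
  rcases lt_or_ge p 31 with hp31 | hp31
  · interval_cases p <;> norm_num [stabilityMajorant, sum_range_succ, factorial]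
  · exact stabilityMajorant_lt_of_31_le hp31

theorem norm_le_six_fifths_of_norm_sum_le_one {p : ℕ} (hp : 3 ≤ p) {z : ℂ}
    (hz : ‖∑ k ∈ range (p + 1), z ^ k / (k ! : ℂ)‖ ≤ 1) : ‖z‖ ≤ 6 * p / 5 :=
  norm_le_of_stabilityMajorant_lt hz (by positivity) (stabilityMajorant_six_fifths_lt hp)

noncomputable def amplificationMajorant (p m : ℕ) (R : ℝ) : ℝ :=
  (m : ℝ) ^ (p - 1) / ((p - m)! * (m - 1)! : ℝ) * (√((m : ℝ) ^ 2 + R ^ 2) / m) ^ (m - 1)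

theorem norm_one_add_div_le {a : ℝ} (ha : 0 < a) {z : ℂ} (hre : z.re ≤ 0) {R : ℝ}
    (hzR : ‖z‖ ≤ R) :
    ‖1 + z / a‖ ≤ √(a ^ 2 + R ^ 2) / a := by
  have ha' : (a : ℂ) ≠ 0 := by exact_mod_cast ha.ne'
  have hza : 1 + z / a = (a + z) / a := by field_simp
  rw [hza, norm_div, Complex.norm_real, Real.norm_of_nonneg ha.le]
  gcongr
  rw [Complex.norm_def]
  apply Real.sqrt_le_sqrt
  have hR2 : z.re * z.re + z.im * z.im ≤ R ^ 2 := by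
    rw [← Complex.normSq_apply, ← Complex.sq_norm]
    exact pow_le_pow_left₀ (norm_nonneg z) hzR 2
  simp only [Complex.normSq_apply, Complex.add_re, Complex.add_im, Complex.ofReal_re,
    Complex.ofReal_im, zero_add]
  nlinarith

theorem one_le_sqrt_sq_add_sq_div {a : ℝ} (ha : 0 < a) (R : ℝ) :
    1 ≤ √(a ^ 2 + R ^ 2) / a := by
  rw [one_le_div ha, Real.le_sqrt ha.le (by positivity)]
  nlinarith

theorem amplification_le_amplificationMajorant {p m ℓ : ℕ} (hm : 1 ≤ m) (hℓm : ℓ ≤ m) {z : ℂ}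
    (hre : z.re ≤ 0) {R : ℝ} (hzR : ‖z‖ ≤ R) :
    (m : ℝ) ^ (p - 1) / ((p - m)! * (m - 1)! : ℝ) * ‖1 + z / m‖ ^ (ℓ - 1)
      ≤ amplificationMajorant p m R := by
  have hm0 : (0 : ℝ) < m := by exact_mod_cast hm
  have hbase := one_le_sqrt_sq_add_sq_div hm0 R
  unfold amplificationMajorant
  gcongr
  calc ‖1 + z / m‖ ^ (ℓ - 1) ≤ (√((m : ℝ) ^ 2 + R ^ 2) / m) ^ (ℓ - 1) := by
        gcongr
        exact_mod_cast norm_one_add_div_le hm0 hre hzR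
    _ ≤ _ := pow_le_pow_right₀ hbase (by omega)

theorem amplificationMajorant_lt_of_sq_lt {p m : ℕ} (hp : 2 ≤ p) (hm : 1 ≤ m) {R : ℝ}
    (h : (m : ℝ) ^ (2 * (p - 1)) * ((m : ℝ) ^ 2 + R ^ 2) ^ (m - 1) * (151 * ((p : ℝ) - 1))
      < 7.01 ^ (2 * p) * ((m : ℝ) ^ 2) ^ (m - 1) * ((p - m)! * (m - 1)! : ℝ) ^ 2) :
    amplificationMajorant p m R < 7.01 ^ p / (3.9 * Real.pi * √((p : ℝ) - 1)) := by
  have hm0 : (0 : ℝ) < m := by exact_mod_cast hm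
  have hp1 : (0 : ℝ) < p - 1 := by
    have : (2 : ℝ) ≤ p := by exact_mod_cast hp
    linarith
  have hmaj_sq : amplificationMajorant p m R ^ 2
      = (m : ℝ) ^ (2 * (p - 1)) * ((m : ℝ) ^ 2 + R ^ 2) ^ (m - 1)
        / (((m : ℝ) ^ 2) ^ (m - 1) * ((p - m)! * (m - 1)! : ℝ) ^ 2) := by
    have hsqrt : (√((m : ℝ) ^ 2 + R ^ 2) ^ (m - 1)) ^ 2
        = ((m : ℝ) ^ 2 + R ^ 2) ^ (m - 1) := by
      rw [← pow_mul, mul_comm, pow_mul, Real.sq_sqrt (by positivity)]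
    simp only [amplificationMajorant, mul_pow, div_pow, hsqrt]
    field_simp
    ring
  have hpi : (3.9 * Real.pi) ^ 2 ≤ 151 := by nlinarith [Real.pi_lt_d2, Real.pi_pos]
  have hrhs_sq : 7.01 ^ (2 * p) / (151 * ((p : ℝ) - 1))
      ≤ (7.01 ^ p / (3.9 * Real.pi * √((p : ℝ) - 1))) ^ 2 := by
    rw [div_pow, mul_pow, Real.sq_sqrt hp1.le, ← pow_mul, mul_comm p]
    gcongr
  refine lt_of_pow_lt_pow_left₀ 2 (by positivity) ?_
  rw [hmaj_sq]
  refine lt_of_lt_of_le ?_ hrhs_sq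
  rw [div_lt_div_iff₀ (by positivity) (by positivity)]
  linarith

theorem amplificationMajorant_lt_of_le_30 {p m : ℕ} (hp : 3 ≤ p) (hp30 : p ≤ 30) (hm : 1 ≤ m)
    (hmp : m ≤ p) :
    amplificationMajorant p m (6 * p / 5) < 7.01 ^ p / (3.9 * Real.pi * √((p : ℝ) - 1)) := by
  -- the hypothesis of `amplificationMajorant_lt_of_sq_lt` at `R = 6p/5`, cleared of denominators
  have hcheck : ∀ q < 31, 3 ≤ q → ∀ j < q + 1, 1 ≤ j →
      j ^ (2 * (q - 1)) * (25 * j ^ 2 + 36 * q ^ 2) ^ (j - 1) * (151 * (q - 1)) * 100 ^ (2 * q)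
        < 701 ^ (2 * q) * (25 * j ^ 2) ^ (j - 1) * ((q - j)! * (j - 1)!) ^ 2 := by
    decide
  have h : ((m ^ (2 * (p - 1)) * (25 * m ^ 2 + 36 * p ^ 2) ^ (m - 1) * (151 * (p - 1))
      * 100 ^ (2 * p) : ℕ) : ℝ) < ((701 ^ (2 * p) * (25 * m ^ 2) ^ (m - 1)
      * ((p - m)! * (m - 1)!) ^ 2 : ℕ) : ℝ) := by
    exact_mod_cast hcheck p (by omega) hp m (by omega) hm
  push_cast [Nat.cast_sub (by omega : 1 ≤ p), mul_pow] at h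
  refine amplificationMajorant_lt_of_sq_lt (by omega) hm ?_
  rw [show (m : ℝ) ^ 2 + (6 * p / 5) ^ 2 = (25 * m ^ 2 + 36 * p ^ 2) / 25 by ring,
    show (7.01 : ℝ) = 701 / 100 by norm_num, div_pow, div_pow]
  field_simp
  linarith

theorem pow_div_factorial_le_exp_mul_div_pow {x t : ℝ} (hx : 0 ≤ x) (ht : 0 < t) (n : ℕ) :
    x ^ n / (n ! : ℝ) ≤ Real.exp (t * x) / t ^ n := by
  rw [le_div_iff₀ (by positivity)]
  calc x ^ n / (n ! : ℝ) * t ^ n = (t * x) ^ n / (n ! : ℝ) := by ring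
    _ ≤ Real.exp (t * x) := Real.pow_div_factorial_le_exp _ (by positivity) n

theorem amplificationMajorant_le_exp {p m : ℕ} (hm : 1 ≤ m) (hmp : m ≤ p) (R : ℝ) :
    amplificationMajorant p m R
      ≤ 3 ^ (p - 1) * Real.exp (1 / 3)
        * Real.exp (Real.exp (1 / 3) / 3 * √((m : ℝ) ^ 2 + R ^ 2)) := by
  have hm0 : (0 : ℝ) < m := by exact_mod_cast hm
  have hsplit : amplificationMajorant p m R = (m : ℝ) ^ (p - m) / ((p - m)! : ℝ)
      * (√((m : ℝ) ^ 2 + R ^ 2) ^ (m - 1) / ((m - 1)! : ℝ)) := by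
    rw [amplificationMajorant, div_pow, show p - 1 = (p - m) + (m - 1) by omega, pow_add]
    field_simp
  set D := √((m : ℝ) ^ 2 + R ^ 2)
  set s := Real.exp (1 / 3) / 3
  have hs : 0 < s := by positivity
  -- `s` is chosen so that `exp (m / 3) / s ^ (m - 1)` no longer depends on `m`
  have hs_pow : Real.exp ((m : ℝ) / 3) / s ^ (m - 1) = 3 ^ (m - 1) * Real.exp (1 / 3) := by
    rw [div_pow, ← Real.exp_nat_mul, Nat.cast_sub hm]
    field_simp
    rw [← Real.exp_add]
    ring_nf
  calc amplificationMajorant p m R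
      ≤ Real.exp (1 / 3 * m) / (1 / 3) ^ (p - m) * (Real.exp (s * D) / s ^ (m - 1)) := by
        rw [hsplit]
        exact mul_le_mul (pow_div_factorial_le_exp_mul_div_pow hm0.le (by norm_num) _)
          (pow_div_factorial_le_exp_mul_div_pow (Real.sqrt_nonneg _) hs _) (by positivity)
          (by positivity)
    _ = 3 ^ (p - m) * (Real.exp ((m : ℝ) / 3) / s ^ (m - 1)) * Real.exp (s * D) := by
        rw [one_div_pow, div_div_eq_mul_div, div_one, one_div_mul_eq_div]
        field_simp
    _ = 3 ^ (p - 1) * Real.exp (1 / 3) * Real.exp (s * D) := by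
        rw [hs_pow, show p - 1 = (p - m) + (m - 1) by omega, pow_add]
        ring

theorem exp_div_le_of_pow_le {a n : ℕ} (hn : n ≠ 0) {c : ℝ} (hc : 0 ≤ c)
    (h : (2.7182818286 : ℝ) ^ a ≤ c ^ n) : Real.exp (a / n) ≤ c := by
  refine le_of_pow_le_pow_left₀ hn hc ?_
  rw [← Real.exp_nat_mul, mul_div_cancel₀ _ (by exact_mod_cast hn), ← Real.exp_one_pow]
  exact (pow_le_pow_left₀ (Real.exp_pos 1).le Real.exp_one_lt_d9.le a).trans h

theorem exp_one_third_le : Real.exp (1 / 3) ≤ 1.3957 := by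
  simpa using exp_div_le_of_pow_le (a := 1) (n := 3) (by norm_num) (by norm_num) (by norm_num)

theorem sqrt_sub_one_lt_pow {p : ℕ} (hp : 31 ≤ p) :
    5.701 * √((p : ℝ) - 1) < (701 / 621) ^ p := by
  have hsq : ∀ q : ℕ, 31 ≤ q → 32.6 * ((q : ℝ) - 1) < ((701 / 621) ^ q) ^ 2 := by
    intro q hq
    induction q, hq using Nat.le_induction with
    | base => norm_num
    | succ q hq ih =>
      have hq' : (31 : ℝ) ≤ q := by exact_mod_cast hq
      rw [pow_succ (701 / 621 : ℝ) q, mul_pow]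
      push_cast
      nlinarith
  have hp1 : (0 : ℝ) ≤ p - 1 := by
    have : (31 : ℝ) ≤ p := by exact_mod_cast hp
    linarith
  refine lt_of_pow_lt_pow_left₀ 2 (by positivity) ?_
  rw [mul_pow, Real.sq_sqrt hp1]
  nlinarith [hsq p hp]

theorem three_pow_mul_exp_mul_pow_lt {p : ℕ} (hp : 31 ≤ p) :
    3 ^ (p - 1) * Real.exp (1 / 3) * 2.07 ^ p
      < 7.01 ^ p / (3.9 * Real.pi * √((p : ℝ) - 1)) := by
  have hp1 : (0 : ℝ) < p - 1 := by
    have : (31 : ℝ) ≤ p := by exact_mod_cast hp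
    linarith
  have hconst : Real.exp (1 / 3) * (3.9 * Real.pi) ≤ 3 * 5.701 := by
    nlinarith [Real.pi_lt_d6, Real.pi_pos, Real.exp_pos (1 / 3), exp_one_third_le]
  have h7 : (7.01 : ℝ) ^ p = 3 ^ (p - 1) * 2.07 ^ p * (3 * (701 / 621) ^ p) := by
    have h3 : (3 : ℝ) ^ p = 3 ^ (p - 1) * 3 := by
      rw [← pow_succ, Nat.sub_add_cancel (by omega)]
    rw [show (7.01 : ℝ) = 3 * 2.07 * (701 / 621) by norm_num, mul_pow, mul_pow, h3]
    ring
  rw [lt_div_iff₀ (by positivity), h7]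
  calc 3 ^ (p - 1) * Real.exp (1 / 3) * 2.07 ^ p * (3.9 * Real.pi * √((p : ℝ) - 1))
      = 3 ^ (p - 1) * 2.07 ^ p * (Real.exp (1 / 3) * (3.9 * Real.pi) * √((p : ℝ) - 1)) := by ring
    _ ≤ 3 ^ (p - 1) * 2.07 ^ p * (3 * 5.701 * √((p : ℝ) - 1)) := by gcongr
    _ < 3 ^ (p - 1) * 2.07 ^ p * (3 * (701 / 621) ^ p) := by
      rw [mul_assoc 3]
      gcongr
      exact sqrt_sub_one_lt_pow hp

theorem amplificationMajorant_lt_of_31_le {p m : ℕ} (hp : 31 ≤ p) (hm : 1 ≤ m) (hmp : m ≤ p) :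
    amplificationMajorant p m (6 * p / 5) < 7.01 ^ p / (3.9 * Real.pi * √((p : ℝ) - 1)) := by
  have hmp' : (m : ℝ) ≤ p := by exact_mod_cast hmp
  have hsqrt : √((m : ℝ) ^ 2 + (6 * p / 5) ^ 2) ≤ 1.5621 * p := by
    rw [Real.sqrt_le_left (by positivity)]
    nlinarith
  have hexponent : Real.exp (1 / 3) / 3 * √((m : ℝ) ^ 2 + (6 * p / 5) ^ 2) ≤ 8 / 11 * p := by
    calc Real.exp (1 / 3) / 3 * √((m : ℝ) ^ 2 + (6 * p / 5) ^ 2)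
        ≤ 1.3957 / 3 * (1.5621 * p) := by
          gcongr
          exact exp_one_third_le
      _ ≤ 8 / 11 * p := by nlinarith
  have hexp : Real.exp (8 / 11 * p) ≤ 2.07 ^ p := by
    rw [mul_comm, Real.exp_nat_mul]
    exact pow_le_pow_left₀ (Real.exp_pos _).le
      (exp_div_le_of_pow_le (a := 8) (n := 11) (by norm_num) (by norm_num) (by norm_num)) p
  calc amplificationMajorant p m (6 * p / 5)
      ≤ 3 ^ (p - 1) * Real.exp (1 / 3)
          * Real.exp (Real.exp (1 / 3) / 3 * √((m : ℝ) ^ 2 + (6 * p / 5) ^ 2)) :=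
        amplificationMajorant_le_exp hm hmp _
    _ ≤ 3 ^ (p - 1) * Real.exp (1 / 3) * 2.07 ^ p := by
        gcongr
        exact (Real.exp_le_exp.mpr hexponent).trans hexp
    _ < 7.01 ^ p / (3.9 * Real.pi * √((p : ℝ) - 1)) := three_pow_mul_exp_mul_pow_lt hp

theorem amplificationMajorant_six_fifths_lt {p m : ℕ} (hp : 3 ≤ p) (hm : 1 ≤ m) (hmp : m ≤ p) :
    amplificationMajorant p m (6 * p / 5) < 7.01 ^ p / (3.9 * Real.pi * √((p : ℝ) - 1)) := by
  rcases le_or_gt p 30 with hp30 | hp31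
  · exact amplificationMajorant_lt_of_le_30 hp hp30 hm hmp
  · exact amplificationMajorant_lt_of_31_le hp31 hm hmp

theorem euler_extrapolation_amplification_bound_left_halfplane_general
    (p : ℕ) (hp : 3 ≤ p) (m ℓ : ℕ) (hm1 : 1 ≤ m) (hmp : m ≤ p)
    (hℓm : ℓ ≤ m) (z : ℂ) (hre : z.re ≤ 0)
    (hz : ‖∑ k ∈ Finset.range (p + 1), z ^ k / (Nat.factorial k : ℂ)‖ ≤ 1) :
    (m : ℝ) ^ (p - 1) / ((Nat.factorial (p - m) : ℝ) * (Nat.factorial (m - 1) : ℝ)) *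
        ‖1 + z / m‖ ^ (ℓ - 1) <
      7.01 ^ p / (3.9 * Real.pi * Real.sqrt ((p : ℝ) - 1)) :=
  (amplification_le_amplificationMajorant hm1 hℓm hre
    (norm_le_six_fifths_of_norm_sum_le_one hp hz)).trans_lt
    (amplificationMajorant_six_fifths_lt hp hm1 hmp)

/-- **Theorem 4.12.** For `p ≥ 3`, the internal stability polynomials of the
order-`p` explicit Euler extrapolation method satisfy, on the intersection of
the absolute stability region `S_p = {z : |∑_{k=0}^p z^k/k!| ≤ 1}` with the
closed left half-plane,
`|Q^{EE}_{p,m,ℓ}(z)| = (m^{p−1}/((p−m)!(m−1)!))·|1 + z/m|^{ℓ−1} < 7.01^p/(3.9·π·√(p−1))`. -/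
theorem euler_extrapolation_amplification_bound_left_halfplane
    (p : ℕ) (hp : 3 ≤ p) (m ℓ : ℕ) (hm1 : 1 ≤ m) (hmp : m ≤ p)
    (hℓ1 : 1 ≤ ℓ) (hℓm : ℓ ≤ m) (z : ℂ) (hre : z.re ≤ 0)
    (hz : ‖∑ k ∈ Finset.range (p + 1), z ^ k / (Nat.factorial k : ℂ)‖ ≤ 1) :
    (m : ℝ) ^ (p - 1) / ((Nat.factorial (p - m) : ℝ) * (Nat.factorial (m - 1) : ℝ)) *
        ‖1 + z / m‖ ^ (ℓ - 1) <
      7.01 ^ p / (3.9 * Real.pi * Real.sqrt ((p : ℝ) - 1)) :=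
  euler_extrapolation_amplification_bound_left_halfplane_general p hp m ℓ hm1 hmp hℓm z hre hz
end

section
/- Let p ≥ 3 be an integer. Then for every integer m with 1 ≤ m ≤ p one has m^p / ((p−m)! · m!) < 3.592^p / (2·π·√(p−1)). -/
/-!
Write `p = m + q`. Stirling's bound `n! ≥ √(2πn) (n/e)^n` for `q!` and `m!` reduces the case
`q ≥ 1` to `(m/q)^q e^p < c^p` with `c = 3.592` (the square roots compare since `p - 1 ≤ qm`).
With `t = m/q` this says `log t < (log c - 1)(1 + t)`; as `max_t (log t - a t) = -1 - log a`, it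
holds for all `t > 0` as soon as `a = log c - 1 > 1/c`, i.e. `c > exp (1 + 1/c)`, and `3.592` lies
just above the root `≈ 3.5911` of `c = exp (1 + 1/c)`. The case `m = p` is Stirling for `p!` alone.
-/

open Real
open scoped Nat

lemma log_le_mul_sub_one_sub_log {a t : ℝ} (ha : 0 < a) (ht : 0 < t) :
    log t ≤ a * t - 1 - log a := by
  have h := log_le_sub_one_of_pos (mul_pos ha ht)
  rw [log_mul ha.ne' ht.ne'] at h
  linarith

lemma log_lt_log_sub_one_mul_one_add {c t : ℝ} (hc₀ : 0 < c) (hc : 1 + c⁻¹ < log c)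
    (ht : 0 < t) : log t < (log c - 1) * (1 + t) := by
  have ha : c⁻¹ < log c - 1 := by linarith
  have hlog : -log c < log (log c - 1) := by
    rw [← log_inv]; exact log_lt_log (inv_pos.mpr hc₀) ha
  linarith [log_le_mul_sub_one_sub_log ((inv_pos.mpr hc₀).trans ha) ht]

lemma div_pow_lt_div_exp_one_pow {c : ℝ} (hc₀ : 0 < c) (hc : 1 + c⁻¹ < log c)
    {m q : ℕ} (hm : 0 < m) (hq : 0 < q) :
    ((m : ℝ) / q) ^ q < (c / exp 1) ^ (m + q) := by
  have ht : 0 < (m : ℝ) / q := by positivity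
  have hlt : (m : ℝ) / q < exp ((log c - 1) * (1 + m / q)) :=
    (log_lt_iff_lt_exp ht).mp (log_lt_log_sub_one_mul_one_add hc₀ hc ht)
  calc ((m : ℝ) / q) ^ q < exp ((log c - 1) * (1 + m / q)) ^ q :=
        pow_lt_pow_left₀ hlt ht.le hq.ne'
    _ = exp (log c - 1) ^ (m + q) := by
        rw [← exp_nat_mul, ← exp_nat_mul]
        congr 1
        field_simp
        push_cast
        ring
    _ = (c / exp 1) ^ (m + q) := by rw [exp_sub, exp_log hc₀]

lemma two_pi_mul_sqrt_mul_mul_le_factorial_mul_factorial (m q : ℕ) :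
    2 * π * √(q * m) * ((q / exp 1) ^ q * (m / exp 1) ^ m) ≤ (q ! * m ! : ℝ) := by
  have hsqrt : √(2 * π * q) * √(2 * π * m) = 2 * π * √(q * m) := by
    rw [← sqrt_mul (by positivity), show 2 * π * q * (2 * π * m) = (2 * π) ^ 2 * (q * m) by ring,
      sqrt_mul (by positivity), sqrt_sq (by positivity)]
  calc 2 * π * √(q * m) * ((q / exp 1) ^ q * (m / exp 1) ^ m)
      = (√(2 * π * q) * (q / exp 1) ^ q) * (√(2 * π * m) * (m / exp 1) ^ m) := by
        rw [← hsqrt]; ring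
    _ ≤ q ! * m ! :=
        mul_le_mul (Stirling.le_factorial_stirling q) (Stirling.le_factorial_stirling m)
          (by positivity) (by positivity)

lemma pow_div_factorial_mul_factorial_lt {c : ℝ} (hc₀ : 0 < c) (hc : 1 + c⁻¹ < log c)
    {m q : ℕ} (hm : 0 < m) (hq : 0 < q) :
    (m : ℝ) ^ (m + q) / (q ! * m !) < c ^ (m + q) / (2 * π * √(q * m)) := by
  have hstirling := two_pi_mul_sqrt_mul_mul_le_factorial_mul_factorial m q
  have hcore := div_pow_lt_div_exp_one_pow hc₀ hc hm hq
  have hM : (0 : ℝ) < m := by exact_mod_cast hm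
  have hQ : (0 : ℝ) < q := by exact_mod_cast hq
  calc (m : ℝ) ^ (m + q) / (q ! * m !)
      ≤ (m : ℝ) ^ (m + q) / (2 * π * √(q * m) * ((q / exp 1) ^ q * (m / exp 1) ^ m)) :=
        div_le_div_of_nonneg_left (by positivity) (by positivity) hstirling
    _ = ((m : ℝ) / q) ^ q * exp 1 ^ (m + q) / (2 * π * √(q * m)) := by
        simp only [div_pow, pow_add]
        field_simp
    _ < (c / exp 1) ^ (m + q) * exp 1 ^ (m + q) / (2 * π * √(q * m)) := by gcongr
    _ = c ^ (m + q) / (2 * π * √(q * m)) := by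
        rw [div_pow, div_mul_cancel₀ _ (by positivity)]

lemma one_add_inv_lt_log_3_592 : 1 + (3.592 : ℝ)⁻¹ < log 3.592 := by
  -- `125 / 449 = 3.592⁻¹`
  have hexp : exp (125 / 449) ≤ 1.3211 := by
    refine (exp_bound' (by norm_num) (by norm_num) (n := 5) (by norm_num)).trans ?_
    norm_num [Finset.sum_range_succ, Nat.factorial]
  have h : exp (1 + 125 / 449) < 3.592 := by
    rw [exp_add]
    nlinarith [exp_one_lt_d9, exp_pos (125 / 449 : ℝ)]
  rw [lt_log_iff_exp_lt (by norm_num)]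
  norm_num at h ⊢
  exact h

lemma self_pow_div_factorial_le {n : ℕ} (hn : n ≠ 0) :
    (n : ℝ) ^ n / n ! ≤ exp 1 ^ n / √(2 * π * n) := by
  have hn₀ : (0 : ℝ) < n := by positivity
  calc (n : ℝ) ^ n / n ! ≤ n ^ n / (√(2 * π * n) * (n / exp 1) ^ n) :=
        div_le_div_of_nonneg_left (by positivity) (by positivity) (Stirling.le_factorial_stirling n)
    _ = exp 1 ^ n / √(2 * π * n) := by
        rw [div_pow]
        field_simp

lemma self_pow_div_factorial_lt {p : ℕ} (hp : 3 ≤ p) :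
    (p : ℝ) ^ p / p ! < 3.592 ^ p / (2 * π * √(p - 1)) := by
  rcases hp.eq_or_lt with rfl | hp4
  · have hsqrt : √2 < 1.4143 := by rw [sqrt_lt' (by norm_num)]; norm_num
    rw [div_lt_div_iff₀ (by norm_num [Nat.factorial]) (by positivity)]
    norm_num [Nat.factorial]
    nlinarith [pi_lt_d2, pi_pos, sqrt_nonneg 2]
  · have hp4R : (4 : ℝ) ≤ p := by exact_mod_cast hp4
    have hsqrt : √(2 * π) < 2.51 := by
      rw [sqrt_lt' (by norm_num)]; nlinarith [pi_lt_d2]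
    have he : exp 1 ≤ 2.72 := exp_one_lt_d9.le.trans (by norm_num)
    have hratio : 2.51 < (3.592 / exp 1) ^ p := calc
      (2.51 : ℝ) < (3.592 / 2.72) ^ 4 := by norm_num
      _ ≤ (3.592 / exp 1) ^ 4 := by gcongr
      _ ≤ (3.592 / exp 1) ^ p :=
          pow_le_pow_right₀ ((one_le_div (exp_pos 1)).mpr (by linarith)) hp4
    have hsqrt_mul : 2 * π * √(p - 1) < √(2 * π) * √(2 * π * p) := by
      rw [← sqrt_mul (by positivity), ← mul_assoc, sqrt_mul (by positivity),
        sqrt_mul_self (by positivity)]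
      gcongr <;> linarith
    have hpow : √(2 * π) * exp 1 ^ p < 3.592 ^ p := by
      rw [div_pow, lt_div_iff₀ (by positivity)] at hratio
      nlinarith [exp_pos 1, pow_pos (exp_pos 1) p]
    calc (p : ℝ) ^ p / p ! ≤ exp 1 ^ p / √(2 * π * p) := self_pow_div_factorial_le (by omega)
      _ < 3.592 ^ p / (2 * π * √(p - 1)) := by
        rw [div_lt_div_iff₀ (by positivity) (mul_pos (by positivity) (sqrt_pos.mpr (by linarith)))]
        calc exp 1 ^ p * (2 * π * √(p - 1)) < exp 1 ^ p * (√(2 * π) * √(2 * π * p)) := by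
              gcongr
          _ = (√(2 * π) * exp 1 ^ p) * √(2 * π * p) := by ring
          _ < 3.592 ^ p * √(2 * π * p) := by gcongr

/-- **Theorem 4.14.** For `p ≥ 3` and every `1 ≤ m ≤ p`,
`m^p/((p−m)!·m!) < 3.592^p/(2·π·√(p−1))`; this bounds the maximum internal
amplification factor `M^{EE}_p({0})` of the order-`p` explicit Euler
extrapolation method at `z = 0`. -/
theorem euler_extrapolation_amplification_at_zero_upper
    (p : ℕ) (hp : 3 ≤ p) (m : ℕ) (hm1 : 1 ≤ m) (hmp : m ≤ p) :
    (m : ℝ) ^ p / ((Nat.factorial (p - m) : ℝ) * (Nat.factorial m : ℝ)) <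
      3.592 ^ p / (2 * Real.pi * Real.sqrt ((p : ℝ) - 1)) := by
  obtain ⟨q, rfl⟩ := Nat.exists_eq_add_of_le hmp
  rw [Nat.add_sub_cancel_left]
  rcases Nat.eq_zero_or_pos q with rfl | hq
  · simpa using self_pow_div_factorial_lt hp
  · have hp1 : ((m + q : ℕ) : ℝ) - 1 ≤ q * m := by
      have : m + q ≤ q * m + 1 := by nlinarith
      rw [sub_le_iff_le_add]
      exact_mod_cast this
    calc _ < 3.592 ^ (m + q) / (2 * π * √(q * m)) :=
          pow_div_factorial_mul_factorial_lt (by norm_num) one_add_inv_lt_log_3_592 hm1 hq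
      _ ≤ _ := by
          gcongr
          have hp3 : (3 : ℝ) ≤ (m + q : ℕ) := by exact_mod_cast hp
          exact mul_pos (by positivity) (sqrt_pos.mpr (by linarith))
end

section
/- For every integer p ≥ 4 there exists an integer m with 1 ≤ m ≤ p such that m^p / ((p−m)! · m!) ≥ (√3/(2e²)) · (3^{1/4}·e)^p / p. In particular max_{1≤m≤p} m^p/((p−m)!·m!) > 0.117 · 3.577^p / p. -/
open Real

lemma fact_le_stirling {n : ℕ} (hn : 1 ≤ n) :
    (Nat.factorial n : ℝ) ≤ exp 1 * Real.sqrt n * ((n : ℝ) / exp 1) ^ n := by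
  have hn0 : (0:ℝ) < (n:ℝ) := by exact_mod_cast hn
  have hden : (0:ℝ) < Real.sqrt (2 * n) * ((n : ℝ) / exp 1) ^ n := by positivity
  have h1 : Stirling.stirlingSeq n ≤ Stirling.stirlingSeq 1 := by
    obtain ⟨j, rfl⟩ := Nat.exists_eq_add_of_le hn
    have h := Stirling.log_stirlingSeq'_antitone (Nat.zero_le j)
    simp only [Function.comp] at h
    have hp1 := Stirling.stirlingSeq'_pos j
    have hp0 := Stirling.stirlingSeq'_pos 0
    simp only [Nat.succ_eq_add_one] at h hp1 hp0
    rw [Real.log_le_log_iff hp1 hp0] at h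
    simpa [add_comm] using h
  rw [Stirling.stirlingSeq_one] at h1
  have h2 : (Nat.factorial n : ℝ) / (Real.sqrt (2 * n) * ((n : ℝ) / exp 1) ^ n) ≤ exp 1 / Real.sqrt 2 := h1
  rw [div_le_iff₀ hden] at h2
  have hs : Real.sqrt (2 * (n:ℝ)) = Real.sqrt 2 * Real.sqrt n := Real.sqrt_mul (by norm_num) _
  calc (Nat.factorial n : ℝ) ≤ exp 1 / Real.sqrt 2 * (Real.sqrt (2 * n) * ((n : ℝ) / exp 1) ^ n) := h2
    _ = exp 1 * Real.sqrt n * ((n : ℝ) / exp 1) ^ n := by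
        rw [hs]
        have : Real.sqrt 2 ≠ 0 := by positivity
        field_simp

lemma rpow_34_le : (3:ℝ) ^ ((3:ℝ)/4) ≤ 8/3 := by
  have h0 : (0:ℝ) ≤ (3:ℝ) ^ ((3:ℝ)/4) := Real.rpow_nonneg (by norm_num) _
  have h4 : ((3:ℝ) ^ ((3:ℝ)/4)) ^ (4:ℕ) = 27 := by
    rw [← Real.rpow_natCast ((3:ℝ) ^ ((3:ℝ)/4)) 4, ← Real.rpow_mul (by norm_num)]
    norm_num
  nlinarith [sq_nonneg ((3:ℝ) ^ ((3:ℝ)/4) - 8/3), sq_nonneg ((3:ℝ) ^ ((3:ℝ)/4) + 8/3),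
    sq_nonneg (((3:ℝ) ^ ((3:ℝ)/4))^2 - 64/9)]

lemma rpow_14_ge : (1.31607:ℝ) ≤ (3:ℝ) ^ ((1:ℝ)/4) := by
  have h : ((1.31607:ℝ) ^ (4:ℕ)) ^ ((1:ℝ)/4) ≤ (3:ℝ) ^ ((1:ℝ)/4) :=
    Real.rpow_le_rpow (by positivity) (by norm_num) (by norm_num)
  rwa [← Real.rpow_natCast (1.31607:ℝ) 4, ← Real.rpow_mul (by norm_num),
    show ((4:ℕ):ℝ) * (1/4) = 1 by norm_num, Real.rpow_one] at h

set_option maxHeartbeats 2000000 in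
/-- **Theorem 4.15.** For every `p ≥ 4` there is `1 ≤ m ≤ p` with
`m^p/((p−m)!·m!) ≥ (√3/(2e²))·(3^{1/4}·e)^p/p`; in particular
`max_{1≤m≤p} m^p/((p−m)!·m!) > 0.117·3.577^p/p`.  This gives a lower bound on
the maximum internal amplification factor `M^{EE}_p({0})` of the order-`p`
explicit Euler extrapolation method at `z = 0`. -/
theorem euler_extrapolation_amplification_at_zero_lower (p : ℕ) (hp : 4 ≤ p) :
    (∃ m : ℕ, 1 ≤ m ∧ m ≤ p ∧
      (Real.sqrt 3 / (2 * Real.exp 1 ^ 2)) * ((3 : ℝ) ^ ((1 : ℝ) / 4) * Real.exp 1) ^ p / p ≤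
        (m : ℝ) ^ p / ((Nat.factorial (p - m) : ℝ) * (Nat.factorial m : ℝ))) ∧
    (∃ m : ℕ, 1 ≤ m ∧ m ≤ p ∧
      0.117 * 3.577 ^ p / (p : ℝ) <
        (m : ℝ) ^ p / ((Nat.factorial (p - m) : ℝ) * (Nat.factorial m : ℝ))) := by
  obtain ⟨q, r, m, hr3, hpqr, hq1, hmdef⟩ :
      ∃ q r m, r ≤ 3 ∧ p = 4 * q + r ∧ 1 ≤ q ∧ m = 3 * q + r :=
    ⟨p / 4, p % 4, 3 * (p / 4) + p % 4, by omega, by omega, by omega, rfl⟩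
  have hm1 : 1 ≤ m := by omega
  have hmp : m ≤ p := by omega
  have hpm : p - m = q := by omega
  have hqm : q + m = p := by omega
  have hE : (0:ℝ) < exp 1 := Real.exp_pos 1
  have hK0 : (0:ℝ) < (q:ℝ) := by exact_mod_cast hq1
  have hM0 : (0:ℝ) < (m:ℝ) := by exact_mod_cast hm1
  have hP0 : (0:ℝ) < (p:ℝ) := by positivity
  have hR0 : (0:ℝ) ≤ (r:ℝ) := by positivity
  have hR3 : (r:ℝ) ≤ 3 := by exact_mod_cast hr3
  have hPr : (p:ℝ) = 4 * q + r := by exact_mod_cast congrArg (Nat.cast (R := ℝ)) hpqr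
  have hMr : (m:ℝ) = 3 * q + r := by push_cast [hmdef]; ring
  have hsqrtKM : Real.sqrt ((q:ℝ) * m) ≤ Real.sqrt 3 * p / 4 := by
    have h3 : (Real.sqrt 3) ^ 2 = 3 := Real.sq_sqrt (by norm_num)
    have hle : (q:ℝ) * m ≤ (Real.sqrt 3 * p / 4) ^ 2 := by
      have heq : (Real.sqrt 3 * (p:ℝ) / 4) ^ 2 = 3 * (p:ℝ)^2 / 16 := by
        rw [div_pow, mul_pow, h3]; ring
      rw [heq, hPr, hMr]; nlinarith
    calc Real.sqrt ((q:ℝ) * m) ≤ Real.sqrt ((Real.sqrt 3 * p / 4) ^ 2) := Real.sqrt_le_sqrt hle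
      _ = Real.sqrt 3 * p / 4 := Real.sqrt_sq (by positivity)
  have h3p4 : (3:ℝ) ^ (((p:ℝ))/4) ≤ (3:ℝ) ^ ((3:ℝ)/4) * 3 ^ q := by
    have h1 : (3:ℝ) ^ (((p:ℝ))/4) ≤ (3:ℝ) ^ ((q:ℝ) + 3/4) := by
      apply Real.rpow_le_rpow_of_exponent_le (by norm_num)
      rw [hPr]; linarith
    have h2 : (3:ℝ) ^ ((q:ℝ) + 3/4) = (3:ℝ) ^ ((3:ℝ)/4) * 3 ^ q := by
      rw [Real.rpow_add (by norm_num), mul_comm, Real.rpow_natCast]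
    linarith [h1, h2.le, h2.ge]
  have hmk : (3:ℝ) ^ q * (q:ℝ) ^ q ≤ (m:ℝ) ^ q := by
    rw [← mul_pow]
    exact pow_le_pow_left₀ (by positivity) (by rw [hMr]; linarith) q
  have key : Real.sqrt 3 / 2 * (3:ℝ) ^ (((p:ℝ))/4) * Real.sqrt ((q:ℝ) * m) * (q:ℝ) ^ q
      ≤ (m:ℝ) ^ q * p := by
    have hs3 : (0:ℝ) ≤ Real.sqrt 3 := Real.sqrt_nonneg 3
    have h33 : Real.sqrt 3 * Real.sqrt 3 = 3 := Real.mul_self_sqrt (by norm_num)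
    calc Real.sqrt 3 / 2 * (3:ℝ) ^ (((p:ℝ))/4) * Real.sqrt ((q:ℝ) * m) * (q:ℝ) ^ q
        ≤ Real.sqrt 3 / 2 * ((3:ℝ) ^ ((3:ℝ)/4) * 3 ^ q) * (Real.sqrt 3 * p / 4) * (q:ℝ) ^ q := by
          gcongr
      _ = (3 / 8 * (3:ℝ) ^ ((3:ℝ)/4)) * ((3:ℝ) ^ q * (q:ℝ) ^ q) * p := by
          linear_combination ((3:ℝ) ^ ((3:ℝ)/4) * (3:ℝ) ^ q * (p:ℝ) * ((q:ℝ) ^ q) / 8) * h33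
      _ ≤ 1 * ((m:ℝ) ^ q) * p := by
          have h1 : 3 / 8 * (3:ℝ) ^ ((3:ℝ)/4) ≤ 1 := by nlinarith [rpow_34_le]
          have h2 : (0:ℝ) ≤ (3:ℝ) ^ q * (q:ℝ) ^ q := by positivity
          exact mul_le_mul_of_nonneg_right (mul_le_mul h1 hmk h2 (by norm_num)) hP0.le
      _ = (m:ℝ) ^ q * p := by ring
  have hFq := fact_le_stirling hq1
  have hFm := fact_le_stirling hm1
  have hFq0 : (0:ℝ) < (Nat.factorial q : ℝ) := by exact_mod_cast Nat.factorial_pos q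
  have hFm0 : (0:ℝ) < (Nat.factorial m : ℝ) := by exact_mod_cast Nat.factorial_pos m
  have hD0 : (0:ℝ) < (exp 1 * Real.sqrt q * ((q : ℝ) / exp 1) ^ q) * (exp 1 * Real.sqrt m * ((m : ℝ) / exp 1) ^ m) := by positivity
  have hFD : (Nat.factorial q : ℝ) * (Nat.factorial m : ℝ)
      ≤ (exp 1 * Real.sqrt q * ((q : ℝ) / exp 1) ^ q) * (exp 1 * Real.sqrt m * ((m : ℝ) / exp 1) ^ m) :=
    mul_le_mul hFq hFm (by positivity) (by positivity)
  have main : (Real.sqrt 3 / (2 * Real.exp 1 ^ 2)) * ((3 : ℝ) ^ ((1 : ℝ) / 4) * Real.exp 1) ^ p / p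
      ≤ (m : ℝ) ^ p / ((Nat.factorial q : ℝ) * (Nat.factorial m : ℝ)) := by
    have step1 : (Real.sqrt 3 / (2 * Real.exp 1 ^ 2)) * ((3 : ℝ) ^ ((1 : ℝ) / 4) * Real.exp 1) ^ p / p
        ≤ (m : ℝ) ^ p / ((exp 1 * Real.sqrt q * ((q : ℝ) / exp 1) ^ q) * (exp 1 * Real.sqrt m * ((m : ℝ) / exp 1) ^ m)) := by
      rw [div_le_div_iff₀ hP0 hD0]
      have h14 : ((3:ℝ) ^ ((1:ℝ)/4)) ^ p = (3:ℝ) ^ (((p:ℝ))/4) := by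
        rw [← Real.rpow_natCast ((3:ℝ) ^ ((1:ℝ)/4)) p, ← Real.rpow_mul (by norm_num)]
        congr 1; ring
      have hEp : exp 1 ^ p = exp 1 ^ q * exp 1 ^ m := by rw [← pow_add, hqm]
      have hMp : (m:ℝ) ^ p = (m:ℝ) ^ q * (m:ℝ) ^ m := by rw [← pow_add, hqm]
      have hsplit : Real.sqrt ((q:ℝ) * m) = Real.sqrt q * Real.sqrt m := Real.sqrt_mul hK0.le _
      have key2 := mul_le_mul_of_nonneg_right key (show (0:ℝ) ≤ (m:ℝ) ^ m by positivity)
      rw [hsplit] at key2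
      have hEne : exp 1 ≠ 0 := hE.ne'
      have eqL : (Real.sqrt 3 / (2 * Real.exp 1 ^ 2)) * ((3 : ℝ) ^ ((1 : ℝ) / 4) * Real.exp 1) ^ p
            * ((exp 1 * Real.sqrt q * ((q : ℝ) / exp 1) ^ q) * (exp 1 * Real.sqrt m * ((m : ℝ) / exp 1) ^ m))
          = Real.sqrt 3 / 2 * (3:ℝ) ^ (((p:ℝ))/4) * (Real.sqrt q * Real.sqrt m) * (q:ℝ) ^ q * (m:ℝ) ^ m := by
        have he2 : Real.exp 1 ^ 2 = Real.exp 1 * Real.exp 1 := sq (Real.exp 1) ▸ sq (Real.exp 1) ▸ by ring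
        rw [mul_pow, h14, div_pow, div_pow, hEp, he2]
        have hq0 : rexp 1 ^ q ≠ 0 := by positivity
        have hm0 : rexp 1 ^ m ≠ 0 := by positivity
        field_simp
      rw [eqL, hMp]
      calc Real.sqrt 3 / 2 * (3:ℝ) ^ (((p:ℝ))/4) * (Real.sqrt q * Real.sqrt m) * (q:ℝ) ^ q * (m:ℝ) ^ m
          ≤ (m:ℝ) ^ q * p * (m:ℝ) ^ m := key2
        _ = (m:ℝ) ^ q * (m:ℝ) ^ m * p := by ring
    exact step1.trans
      (div_le_div_of_nonneg_left (by positivity) (mul_pos hFq0 hFm0) hFD)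
  refine ⟨⟨m, hm1, hmp, by rw [hpm]; exact main⟩, ⟨m, hm1, hmp, ?_⟩⟩
  rw [hpm]
  refine lt_of_lt_of_le ?_ main
  have hC : (0.117:ℝ) < Real.sqrt 3 / (2 * Real.exp 1 ^ 2) := by
    have hE2 : Real.exp 1 ^ 2 < 7.3890561 := by
      nlinarith [Real.exp_one_lt_d9, (Real.exp_pos 1).le]
    have hs3 : (1.7320:ℝ) < Real.sqrt 3 := by
      nlinarith [Real.sq_sqrt (show (0:ℝ) ≤ 3 by norm_num), Real.sqrt_nonneg 3]
    rw [lt_div_iff₀ (by positivity)]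
    nlinarith
  have hA : (3.577:ℝ) ≤ (3 : ℝ) ^ ((1 : ℝ) / 4) * Real.exp 1 := by
    have hEg : (2.7182818283:ℝ) < Real.exp 1 := Real.exp_one_gt_d9
    nlinarith [rpow_14_ge, Real.rpow_nonneg (show (0:ℝ) ≤ 3 by norm_num) ((1:ℝ)/4)]
  have h0 : (0:ℝ) < (3.577:ℝ) ^ p := by positivity
  have hstep : (0.117:ℝ) * 3.577 ^ p
      < (Real.sqrt 3 / (2 * Real.exp 1 ^ 2)) * ((3 : ℝ) ^ ((1 : ℝ) / 4) * Real.exp 1) ^ p := by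
    calc (0.117:ℝ) * 3.577 ^ p < (Real.sqrt 3 / (2 * Real.exp 1 ^ 2)) * 3.577 ^ p :=
          mul_lt_mul_of_pos_right hC h0
      _ ≤ (Real.sqrt 3 / (2 * Real.exp 1 ^ 2)) * ((3 : ℝ) ^ ((1 : ℝ) / 4) * Real.exp 1) ^ p := by
          gcongr <;> first | exact hA | positivity | norm_num
  exact div_lt_div_of_pos_right hstep hP0
end
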